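/- arXiv:1504.05756 — 2 statements merged into one kernel-verified Lean document; each statement's English description precedes it below -/
import Mathlib

section
/- Converse part of the main theorem: Let 𝒳, 𝒲, 𝒵, P, d_L, d_E be as in the achievability setting, with P of full support, per-letter zero-distortion reproductions existing for both measures, and d_E more lenient than d_L. Let S = {(k_n, f_n, φ_n)}_{n≥1} be a sequence of variable key rate secure rate-distortion codes such that: (1) k_n(x) ≤ n log₂|𝒳| for all x ∈ 𝒳^n; (2) there is a function R̄ : 𝒫(𝒳) → ℝ with uniform convergence in probability of the conditional key rate, i.e. for every δ > 0, max_{Q ∈ 𝒫_n(𝒳)} P[ |k_n(X)/n − R̄(Q)| > δ | X ∈ T_n(Q) ] → 0 as n → ∞; (3) each encoder f_n is admissible (for each x, the map u ↦ f_n(x,u) is injective on {0,1}^{k_n(x)}); (4) 0 < Ec ≤ E_L(P,Dc,Rc) and S satisfies the compression constraint (Rc,Dc,Ec); and (5) the average key rate satisfies E[k_n(X)]/n ≤ R for all n. Then for every D ≥ Dc, limsup_{n→∞} −(1/n) log₂ max_{σ : 𝒴_n → 𝒵^n} P[ d_E(X, σ(Y_n)) ≤ D ] ≤ min{R, E_e*(D)},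 where Y_n = f_n(X, (U_1,…,U_{k_n(X)})), the U_i are i.i.d. fair bits independent of the i.i.d. source X ~ P^n, and E_e*(D) = inf_Q { D(Q‖P) + R_{d_E}(Q,D) }. -/
open scoped BigOperators

noncomputable section

open Classical in
/-- Indicator of a proposition, as a real number. -/
def ind (p : Prop) : ℝ := if p then 1 else 0

/-- Average per-letter distortion between sequences. -/
def seqDist {A B : Type*} (d : A → B → ℝ) {n : ℕ} (x : Fin n → A) (z : Fin n → B) : ℝ :=
  (n : ℝ)⁻¹ * ∑ i, d (x i) (z i)

/-- Empirical distribution (type) of a sequence. -/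
def empDist {A : Type*} [Fintype A] [DecidableEq A] {n : ℕ} (x : Fin n → A) : A → ℝ :=
  fun a => ((Finset.univ.filter fun i => x i = a).card : ℝ) / n

/-- Type class of `Q` among length-`n` sequences. -/
def typeClass (A : Type*) [Fintype A] [DecidableEq A] (n : ℕ) (Q : A → ℝ) :
    Set (Fin n → A) := {x | empDist x = Q}

/-- `p` is a probability distribution on a finite alphabet. -/
def IsDist {A : Type*} [Fintype A] (p : A → ℝ) : Prop :=
  (∀ a, 0 ≤ p a) ∧ ∑ a, p a = 1

/-- Information divergence (base 2). -/
def KL {A : Type*} [Fintype A] (Q P : A → ℝ) : ℝ := ∑ a, Q a * Real.logb 2 (Q a / P a)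

/-- Mutual information (base 2) of a joint distribution on `A × B`. -/
def mutInfo {A B : Type*} [Fintype A] [Fintype B] (q : A × B → ℝ) : ℝ :=
  ∑ p : A × B, q p * Real.logb 2 (q p / ((∑ b, q (p.1, b)) * (∑ a, q (a, p.2))))

/-- Rate-distortion function of `Q` under distortion `d` at level `D`. -/
def rateDist {A B : Type*} [Fintype A] [Fintype B] (d : A → B → ℝ) (Q : A → ℝ) (D : ℝ) : ℝ :=
  sInf {r | ∃ q : A × B → ℝ, IsDist q ∧ (∀ a, ∑ b, q (a, b) = Q a) ∧
    (∑ p : A × B, q p * d p.1 p.2) ≤ D ∧ r = mutInfo q}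

/-- Marton's source-coding exponent (as an extended real: `⊤` when no distribution `Q`
satisfies `R_{d_L}(Q,Dc) > Rc`). -/
def martonExp {A W : Type*} [Fintype A] [Fintype W] (P : A → ℝ) (dL : A → W → ℝ)
    (Dc Rc : ℝ) : EReal :=
  sInf {e : EReal | ∃ Q : A → ℝ, IsDist Q ∧ Rc < rateDist dL Q Dc ∧ e = (KL Q P : EReal)}

/-- The perfect-secrecy exponent `E_e*(D) = inf_Q { D(Q‖P) + R_{d_E}(Q,D) }`. -/
def perfSecExp {A Z : Type*} [Fintype A] [Fintype Z] (P : A → ℝ) (dE : A → Z → ℝ)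
    (D : ℝ) : ℝ :=
  sInf {e : ℝ | ∃ Q : A → ℝ, IsDist Q ∧ e = KL Q P + rateDist dE Q D}

/-- Extension of a finite key string to an infinite key stream (padding with `false`). -/
def extKey {K : ℕ} (u : Fin K → Bool) : ℕ → Bool :=
  fun i => if h : i < K then u ⟨i, h⟩ else false


lemma ind_nonneg (p : Prop) : 0 ≤ ind p := by
  unfold ind; split <;> norm_num

lemma ind_le_one (p : Prop) : ind p ≤ 1 := by
  unfold ind; split <;> norm_num

lemma ind_of {p : Prop} (h : p) : ind p = 1 := by simp [ind, h]

lemma ind_of_not {p : Prop} (h : ¬ p) : ind p = 0 := by simp [ind, h]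

lemma ind_congr {p q : Prop} (h : p ↔ q) : ind p = ind q := by
  by_cases hp : p
  · rw [ind_of hp, ind_of (h.mp hp)]
  · rw [ind_of_not hp, ind_of_not (fun hq => hp (h.mpr hq))]

lemma ind_mul_le {a b c : Prop} (h : a → b → c) : ind a * ind b ≤ ind c := by
  by_cases ha : a
  · by_cases hb : b
    · rw [ind_of ha, ind_of hb, ind_of (h ha hb)]; norm_num
    · rw [ind_of_not hb, mul_zero]; exact ind_nonneg _
  · rw [ind_of_not ha, zero_mul]; exact ind_nonneg _

lemma one_sub_ind_le {a b c : Prop} (hc : ¬a → b ∨ c) :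
    1 - ind b - ind c ≤ ind a := by
  by_cases ha : a
  · rw [ind_of ha]
    have := ind_nonneg b; have := ind_nonneg c; linarith
  · rcases hc ha with hb | hcc
    · rw [ind_of hb]; have := ind_nonneg c; have := ind_nonneg a; linarith
    · rw [ind_of hcc]; have := ind_nonneg b; have := ind_nonneg a; linarith

section prodsum

variable {A : Type*} [Fintype A]

lemma sum_prod_pi {n : ℕ} (G : Fin n → A → ℝ) :
    ∑ ω : Fin n → A, ∏ i, G i (ω i) = ∏ i, ∑ a, G i a :=
  (Fintype.prod_sum G).symm

lemma sum_prod_dist {n : ℕ} (p : A → ℝ) (hp1 : ∑ a, p a = 1) :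
    ∑ ω : Fin n → A, ∏ i, p (ω i) = 1 := by
  rw [sum_prod_pi (fun _ => p)]
  simp [hp1]

lemma margin_one {n : ℕ} (p F : A → ℝ) (hp1 : ∑ a, p a = 1) (i0 : Fin n) :
    ∑ ω : Fin n → A, (∏ i, p (ω i)) * F (ω i0) = ∑ a, p a * F a := by
  have h1 : ∀ ω : Fin n → A, (∏ i, p (ω i)) * F (ω i0)
      = ∏ i, (p (ω i) * (if i = i0 then F (ω i) else 1)) := by
    intro ω
    rw [Finset.prod_mul_distrib, Finset.prod_ite_eq' Finset.univ i0 (fun i => F (ω i))]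
    simp
  simp_rw [h1]
  rw [sum_prod_pi (fun i a => p a * (if i = i0 then F a else 1))]
  have h2 : ∀ i : Fin n, (∑ a, p a * (if i = i0 then F a else 1))
      = if i = i0 then ∑ a, p a * F a else 1 := by
    intro i; split_ifs with h <;> simp [hp1]
  rw [Finset.prod_congr rfl (fun i _ => h2 i),
    Finset.prod_ite_eq' Finset.univ i0 (fun _ => ∑ a, p a * F a)]
  simp

lemma margin_two {n : ℕ} (p F G : A → ℝ) (hp1 : ∑ a, p a = 1) (i0 j0 : Fin n)
    (hij : i0 ≠ j0) :
    ∑ ω : Fin n → A, (∏ i, p (ω i)) * (F (ω i0) * G (ω j0))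
      = (∑ a, p a * F a) * (∑ a, p a * G a) := by
  have h1 : ∀ ω : Fin n → A, (∏ i, p (ω i)) * (F (ω i0) * G (ω j0))
      = ∏ i, (p (ω i) * ((if i = i0 then F (ω i) else 1) * (if i = j0 then G (ω i) else 1))) := by
    intro ω
    simp_rw [Finset.prod_mul_distrib]
    rw [Finset.prod_ite_eq' Finset.univ i0 (fun i => F (ω i)),
      Finset.prod_ite_eq' Finset.univ j0 (fun i => G (ω i))]
    simp [mul_assoc]
  simp_rw [h1]
  rw [sum_prod_pi (fun i a => p a * ((if i = i0 then F a else 1) * (if i = j0 then G a else 1)))]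
  have h2 : ∀ i : Fin n, (∑ a, p a * ((if i = i0 then F a else 1) * (if i = j0 then G a else 1)))
      = (if i = i0 then ∑ a, p a * F a else 1) * (if i = j0 then ∑ a, p a * G a else 1) := by
    intro i
    by_cases h : i = i0
    · have h' : i ≠ j0 := by rw [h]; exact hij
      simp only [if_pos h, if_neg h']
      simp
    · simp only [if_neg h]
      by_cases h' : i = j0
      · simp only [if_pos h']
        simp
      · simp only [if_neg h']
        simp [hp1]
  rw [Finset.prod_congr rfl (fun i _ => h2 i), Finset.prod_mul_distrib,
    Finset.prod_ite_eq' Finset.univ i0 (fun _ => ∑ a, p a * F a),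
    Finset.prod_ite_eq' Finset.univ j0 (fun _ => ∑ a, p a * G a)]
  simp

lemma expect_sq {n : ℕ} (p g : A → ℝ) (hp1 : ∑ a, p a = 1)
    (hg : ∑ a, p a * g a = 0) :
    ∑ ω : Fin n → A, (∏ i, p (ω i)) * (∑ i, g (ω i))^2 = n * ∑ a, p a * g a ^ 2 := by
  have expand : ∀ ω : Fin n → A, (∏ i, p (ω i)) * (∑ i, g (ω i))^2
      = ∑ i : Fin n, ∑ j : Fin n, (∏ i', p (ω i')) * (g (ω i) * g (ω j)) := by
    intro ω
    rw [sq, Finset.sum_mul_sum, Finset.mul_sum]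
    refine Finset.sum_congr rfl fun i _ => ?_
    rw [Finset.mul_sum]
  simp_rw [expand]
  rw [Finset.sum_comm]
  have swap2 : ∀ i : Fin n,
      ∑ ω : Fin n → A, ∑ j : Fin n, (∏ i', p (ω i')) * (g (ω i) * g (ω j))
      = ∑ j : Fin n, ∑ ω : Fin n → A, (∏ i', p (ω i')) * (g (ω i) * g (ω j)) := fun i =>
    Finset.sum_comm
  rw [Finset.sum_congr rfl (fun i _ => swap2 i)]
  have inner : ∀ i j : Fin n, (∑ ω : Fin n → A, (∏ i', p (ω i')) * (g (ω i) * g (ω j)))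
      = if j = i then ∑ a, p a * g a ^ 2 else 0 := by
    intro i j
    split_ifs with h
    · subst h
      have := margin_one p (fun a => g a ^ 2) hp1 j
      simpa [sq, mul_assoc] using this
    · rw [margin_two p g g hp1 i j (fun hh => h hh.symm), hg]
      ring
  calc ∑ i : Fin n, ∑ j : Fin n, ∑ ω : Fin n → A, (∏ i', p (ω i')) * (g (ω i) * g (ω j))
      = ∑ i : Fin n, ∑ j : Fin n, if j = i then ∑ a, p a * g a ^ 2 else 0 := by
        refine Finset.sum_congr rfl fun i _ => Finset.sum_congr rfl fun j _ => inner i j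
    _ = ∑ _i : Fin n, ∑ a, p a * g a ^ 2 := by
        refine Finset.sum_congr rfl fun i _ => ?_
        rw [Finset.sum_ite_eq' Finset.univ i (fun _ => ∑ a, p a * g a ^ 2)]
        simp
    _ = n * ∑ a, p a * g a ^ 2 := by
        rw [Finset.sum_const, Finset.card_univ, Fintype.card_fin, nsmul_eq_mul]

end prodsum
lemma cheb {A : Type*} [Fintype A] (p h : A → ℝ) (hp0 : ∀ a, 0 ≤ p a) (hp1 : ∑ a, p a = 1)
    (c : ℝ) (hc : ∑ a, p a * h a < c) {n : ℕ} (hn : 0 < n) :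
    ∑ ω : Fin n → A, (∏ i, p (ω i)) * ind (c < (n : ℝ)⁻¹ * ∑ i, h (ω i))
      ≤ (∑ a, p a * (h a - ∑ b, p b * h b)^2) / ((c - ∑ a, p a * h a)^2 * n) := by
  set μ := ∑ a, p a * h a with hμ
  set δ := c - μ with hδdef
  have hδ : 0 < δ := by simp only [hδdef]; linarith
  set g : A → ℝ := fun a => h a - μ with hgdef
  have hg0 : ∑ a, p a * g a = 0 := by
    simp only [hgdef, mul_sub, Finset.sum_sub_distrib, ← Finset.sum_mul, hp1]
    simp [hμ]
  have hnR : (0:ℝ) < n := by exact_mod_cast hn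
  have hpoint : ∀ ω : Fin n → A, (∏ i, p (ω i)) * ind (c < (n : ℝ)⁻¹ * ∑ i, h (ω i))
      ≤ (∏ i, p (ω i)) * ((∑ i, g (ω i))^2 / ((n:ℝ) * δ)^2) := by
    intro ω
    have hprod : 0 ≤ ∏ i, p (ω i) := Finset.prod_nonneg fun i _ => hp0 _
    refine mul_le_mul_of_nonneg_left ?_ hprod
    by_cases hev : c < (n : ℝ)⁻¹ * ∑ i, h (ω i)
    · rw [ind_of hev]
      have hsum : (n:ℝ) * δ ≤ ∑ i, g (ω i) := by
        have h1 : (n:ℝ) * c < ∑ i, h (ω i) := by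
          have := mul_lt_mul_of_pos_left hev hnR
          rwa [mul_inv_cancel_left₀ (ne_of_gt hnR)] at this
        have h2 : ∑ i, g (ω i) = (∑ i, h (ω i)) - n * μ := by
          simp [hgdef, Finset.sum_sub_distrib, mul_comm]
        rw [h2, hδdef]; nlinarith
      have hpos : 0 < (n:ℝ) * δ := mul_pos hnR hδ
      rw [le_div_iff₀ (by positivity), one_mul]
      have := mul_self_le_mul_self (le_of_lt hpos) hsum
      calc ((n:ℝ)*δ)^2 = ((n:ℝ)*δ) * ((n:ℝ)*δ) := sq ((n:ℝ)*δ)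
        _ ≤ (∑ i, g (ω i)) * (∑ i, g (ω i)) := this
        _ = (∑ i, g (ω i))^2 := (sq _).symm
    · rw [ind_of_not hev]
      positivity
  calc ∑ ω : Fin n → A, (∏ i, p (ω i)) * ind (c < (n : ℝ)⁻¹ * ∑ i, h (ω i))
      ≤ ∑ ω : Fin n → A, (∏ i, p (ω i)) * ((∑ i, g (ω i))^2 / ((n:ℝ) * δ)^2) :=
        Finset.sum_le_sum fun ω _ => hpoint ω
    _ = (∑ ω : Fin n → A, (∏ i, p (ω i)) * (∑ i, g (ω i))^2) / ((n:ℝ) * δ)^2 := by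
        rw [Finset.sum_div]
        refine Finset.sum_congr rfl fun ω _ => ?_
        rw [mul_div_assoc]
    _ = ((n:ℝ) * ∑ a, p a * g a ^ 2) / ((n:ℝ) * δ)^2 := by
        rw [expect_sq p g hp1 hg0]
    _ = (∑ a, p a * g a ^ 2) / (δ^2 * n) := by
        field_simp

lemma rpow_sum_helper {ι : Type*} (s : Finset ι) (v : ι → ℝ) :
    (2:ℝ) ^ (∑ i ∈ s, v i) = ∏ i ∈ s, (2:ℝ) ^ (v i) := by
  simp_rw [Real.rpow_def_of_pos two_pos]
  rw [← Real.exp_sum, Finset.mul_sum]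

lemma logSum2 {u₁ u₂ v₁ v₂ : ℝ} (hu₁ : 0 ≤ u₁) (hu₂ : 0 ≤ u₂) (hv₁ : 0 ≤ v₁) (hv₂ : 0 ≤ v₂)
    (h₁ : u₁ = 0 ∨ 0 < v₁) (h₂ : u₂ = 0 ∨ 0 < v₂) :
    (u₁ + u₂) * Real.logb 2 ((u₁ + u₂) / (v₁ + v₂))
      ≤ u₁ * Real.logb 2 (u₁ / v₁) + u₂ * Real.logb 2 (u₂ / v₂) := by
  rcases eq_or_lt_of_le hu₁ with hu₁0 | hu₁p
  · rcases eq_or_lt_of_le hu₂ with hu₂0 | hu₂p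
    · simp [← hu₁0, ← hu₂0]
    · have hv₂p : 0 < v₂ := h₂.resolve_left (ne_of_gt hu₂p)
      rw [← hu₁0, zero_add, zero_mul, zero_add]
      have hx : 0 < u₂ / (v₁ + v₂) := by positivity
      have hxy : u₂ / (v₁ + v₂) ≤ u₂ / v₂ := by gcongr; linarith
      exact mul_le_mul_of_nonneg_left (Real.logb_le_logb_of_le one_lt_two hx hxy) hu₂
  · have hv₁p : 0 < v₁ := h₁.resolve_left (ne_of_gt hu₁p)
    rcases eq_or_lt_of_le hu₂ with hu₂0 | hu₂p
    · rw [← hu₂0]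
      simp only [add_zero, zero_mul]
      have hx : 0 < u₁ / (v₁ + v₂) := by positivity
      have hxy : u₁ / (v₁ + v₂) ≤ u₁ / v₁ := by gcongr; linarith
      exact mul_le_mul_of_nonneg_left (Real.logb_le_logb_of_le one_lt_two hx hxy) hu₁
    · have hv₂p : 0 < v₂ := h₂.resolve_left (ne_of_gt hu₂p)
      have hL : 0 < Real.log 2 := Real.log_pos one_lt_two
      have hs : 0 < u₁ + u₂ := by linarith
      have ht : 0 < v₁ + v₂ := by linarith
      have key : (u₁ + u₂) * Real.log ((u₁ + u₂) / (v₁ + v₂))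
          ≤ u₁ * Real.log (u₁ / v₁) + u₂ * Real.log (u₂ / v₂) := by
        set a₁ := v₁ * (u₁ + u₂) / (u₁ * (v₁ + v₂)) with ha₁def
        set a₂ := v₂ * (u₁ + u₂) / (u₂ * (v₁ + v₂)) with ha₂def
        have ha₁p : 0 < a₁ := by rw [ha₁def]; positivity
        have ha₂p : 0 < a₂ := by rw [ha₂def]; positivity
        have e₁ : Real.log ((u₁+u₂)/(v₁+v₂)) = Real.log (u₁/v₁) + Real.log a₁ := by
          rw [← Real.log_mul (by positivity) (ne_of_gt ha₁p)]
          congr 1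
          rw [ha₁def]
          field_simp
        have e₂ : Real.log ((u₁+u₂)/(v₁+v₂)) = Real.log (u₂/v₂) + Real.log a₂ := by
          rw [← Real.log_mul (by positivity) (ne_of_gt ha₂p)]
          congr 1
          rw [ha₂def]
          field_simp
        have b₁ : Real.log a₁ ≤ a₁ - 1 := Real.log_le_sub_one_of_pos ha₁p
        have b₂ : Real.log a₂ ≤ a₂ - 1 := Real.log_le_sub_one_of_pos ha₂p
        have m₁ : u₁ * Real.log a₁ ≤ u₁ * (a₁ - 1) := mul_le_mul_of_nonneg_left b₁ hu₁
        have m₂ : u₂ * Real.log a₂ ≤ u₂ * (a₂ - 1) := mul_le_mul_of_nonneg_left b₂ hu₂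
        have hsum : u₁ * a₁ + u₂ * a₂ = u₁ + u₂ := by
          rw [ha₁def, ha₂def]
          field_simp
        have expand : (u₁+u₂) * Real.log ((u₁+u₂)/(v₁+v₂))
            = u₁ * Real.log (u₁/v₁) + u₂ * Real.log (u₂/v₂)
              + (u₁ * Real.log a₁ + u₂ * Real.log a₂) := by
          rw [show (u₁+u₂) * Real.log ((u₁+u₂)/(v₁+v₂))
              = u₁ * Real.log ((u₁+u₂)/(v₁+v₂)) + u₂ * Real.log ((u₁+u₂)/(v₁+v₂)) by ring]
          nth_rewrite 1 [e₁]
          rw [e₂]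
          ring
        rw [expand]
        linarith
      simp only [Real.logb]
      simp only [← mul_div_assoc]
      rw [← add_div]
      exact (div_le_div_iff_of_pos_right hL).mpr key

lemma mul_logb_inv_le {x : ℝ} (hx : 0 < x) : x * Real.logb 2 x⁻¹ ≤ 2 := by
  have hL : 0 < Real.log 2 := Real.log_pos one_lt_two
  have hL2 : (1:ℝ)/2 ≤ Real.log 2 := by
    have := Real.log_two_gt_d9; linarith
  have h1 : Real.log x⁻¹ ≤ x⁻¹ - 1 := Real.log_le_sub_one_of_pos (by positivity)
  have h2 : x * Real.log x⁻¹ ≤ 1 := by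
    have h3 : x * Real.log x⁻¹ ≤ x * (x⁻¹ - 1) := mul_le_mul_of_nonneg_left h1 (le_of_lt hx)
    have h4 : x * (x⁻¹ - 1) = 1 - x := by field_simp
    linarith
  simp only [Real.logb, ← mul_div_assoc]
  rw [div_le_iff₀ hL]
  nlinarith

lemma jensen_rpow {ι : Type*} [Fintype ι] (w v : ι → ℝ) (hw : ∀ i, 0 ≤ w i)
    (hw1 : ∑ i, w i = 1) :
    (2:ℝ) ^ (-(∑ i, w i * v i)) ≤ ∑ i, w i * (2:ℝ) ^ (-(v i)) := by
  have hconv : ConvexOn ℝ Set.univ (fun tt : ℝ => (2:ℝ) ^ (-tt)) := by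
    refine ⟨convex_univ, fun x _ y _ a b ha hb hab => ?_⟩
    simp only [smul_eq_mul]
    rw [Real.rpow_def_of_pos two_pos, Real.rpow_def_of_pos two_pos,
      Real.rpow_def_of_pos two_pos]
    have hc := convexOn_exp.2 (Set.mem_univ (Real.log 2 * (-x)))
      (Set.mem_univ (Real.log 2 * (-y))) ha hb hab
    simp only [smul_eq_mul] at hc
    calc Real.exp (Real.log 2 * -(a * x + b * y))
        = Real.exp (a * (Real.log 2 * -x) + b * (Real.log 2 * -y)) := by ring_nf
      _ ≤ a * Real.exp (Real.log 2 * -x) + b * Real.exp (Real.log 2 * -y) := hc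
  have := hconv.map_sum_le (t := Finset.univ) (w := w) (p := v)
    (fun i _ => hw i) hw1 (fun i _ => Set.mem_univ _)
  simp only [smul_eq_mul] at this
  calc (2:ℝ) ^ (-(∑ i, w i * v i)) = (fun tt : ℝ => (2:ℝ) ^ (-tt)) (∑ i, w i * v i) := rfl
    _ ≤ ∑ i, w i * (2:ℝ) ^ (-(v i)) := this

lemma eventually_rpow_small {a : ℝ} (ha : 0 < a) {η : ℝ} (hη : 0 < η) :
    ∀ᶠ n : ℕ in Filter.atTop, (2:ℝ) ^ (-((n:ℝ) * a)) ≤ η := by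
  rw [Filter.eventually_atTop]
  refine ⟨⌈(max 0 (-Real.logb 2 η)) / a⌉₊, fun n hn => ?_⟩
  have h1 : (max 0 (-Real.logb 2 η)) / a ≤ (n:ℝ) :=
    le_trans (Nat.le_ceil _) (by exact_mod_cast hn)
  have h2 : -Real.logb 2 η ≤ (n:ℝ) * a :=
    le_trans (le_max_right _ _) ((div_le_iff₀ ha).mp h1)
  calc (2:ℝ) ^ (-((n:ℝ)*a)) ≤ (2:ℝ) ^ (Real.logb 2 η) := by
        exact (Real.rpow_le_rpow_left_iff one_lt_two).mpr (by linarith)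
    _ = η := Real.rpow_logb two_pos (by norm_num) hη

lemma neg_inv_logb_mono {n : ℕ} {S L : ℝ} (hL : 0 < L) (hLS : L ≤ S) :
    -(n:ℝ)⁻¹ * Real.logb 2 S ≤ -(n:ℝ)⁻¹ * Real.logb 2 L := by
  apply mul_le_mul_of_nonpos_left (Real.logb_le_logb_of_le one_lt_two hL hLS)
  have : (0:ℝ) ≤ (n:ℝ)⁻¹ := by positivity
  linarith
lemma div_le_quarter_eventually {V s : ℝ} (hV : 0 ≤ V) (hs : 0 < s) :
    ∃ N : ℕ, ∀ n : ℕ, N ≤ n → 0 < n → V / (s * n) ≤ 1/4 := by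
  refine ⟨⌈4 * V / s⌉₊, fun n hn hn0 => ?_⟩
  have hnR : (0:ℝ) < n := by exact_mod_cast hn0
  rw [div_le_iff₀ (by positivity)]
  have h1 : 4 * V / s ≤ (n:ℝ) := le_trans (Nat.le_ceil _) (by exact_mod_cast hn)
  rw [div_le_iff₀ hs] at h1
  nlinarith

set_option maxHeartbeats 2000000 in
lemma partII {X Z : Type*} [Fintype X] [Fintype Z] [Nonempty X] [Nonempty Z]
    (P : X → ℝ) (hP : IsDist P) (hPfull : ∀ a, 0 < P a)
    (dE : X → Z → ℝ) (hdE0 : ∀ a b, 0 ≤ dE a b) (hzeroE : ∀ a, ∃ b, dE a b = 0)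
    (D : ℝ) (hD : 0 ≤ D) (ε : ℝ) (hε : 0 < ε) :
    ∃ N : ℕ, ∀ n, N ≤ n → 0 < n → ∃ z : Fin n → Z,
      (2:ℝ) ^ (-((n:ℝ) * (perfSecExp P dE D + ε))) ≤
        ∑ x : Fin n → X, (∏ i, P (x i)) * ind (seqDist dE x z ≤ D) := by
  classical
  -- zero-distortion reproduction map
  choose g hg using hzeroE
  -- near-optimal Q
  obtain ⟨e, hemem, helt⟩ := Real.lt_sInf_add_pos
    (s := {e : ℝ | ∃ Q : X → ℝ, IsDist Q ∧ e = KL Q P + rateDist dE Q D})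
    ⟨KL P P + rateDist dE P D, P, hP, rfl⟩ (show (0:ℝ) < ε/8 by linarith)
  obtain ⟨Q, hQ, rfl⟩ := hemem
  have helt' : KL Q P + rateDist dE Q D < perfSecExp P dE D + ε/8 := helt
  -- zero-distortion coupling
  set q₀ : X × Z → ℝ := fun p => if p.2 = g p.1 then Q p.1 else 0 with hq₀def
  have hq₀0 : ∀ p, 0 ≤ q₀ p := by
    intro p; rw [hq₀def]; dsimp only; split_ifs; exacts [hQ.1 _, le_refl 0]
  have hq₀marg : ∀ a, ∑ b, q₀ (a, b) = Q a := by
    intro a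
    simp only [hq₀def]
    rw [Finset.sum_ite_eq' Finset.univ (g a) (fun _ => Q a)]
    simp
  have hq₀sum : ∑ p : X × Z, q₀ p = 1 := by
    rw [Fintype.sum_prod_type]
    calc ∑ a, ∑ b, q₀ (a, b) = ∑ a, Q a := Finset.sum_congr rfl fun a _ => hq₀marg a
      _ = 1 := hQ.2
  have hq₀d : (∑ p : X × Z, q₀ p * dE p.1 p.2) = 0 := by
    rw [Fintype.sum_prod_type]
    refine Finset.sum_eq_zero fun a _ => ?_
    refine Finset.sum_eq_zero fun b _ => ?_
    simp only [hq₀def]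
    by_cases hb : b = g a
    · rw [if_pos hb, hb, hg a, mul_zero]
    · rw [if_neg hb, zero_mul]
  -- near-optimal coupling
  obtain ⟨rr, hrmem, hrlt⟩ := Real.lt_sInf_add_pos
    (s := {r : ℝ | ∃ q : X × Z → ℝ, IsDist q ∧ (∀ a, ∑ b, q (a, b) = Q a) ∧
      (∑ p : X × Z, q p * dE p.1 p.2) ≤ D ∧ r = mutInfo q})
    ⟨mutInfo q₀, q₀, ⟨hq₀0, hq₀sum⟩, hq₀marg, by rw [hq₀d]; exact hD, rfl⟩
    (show (0:ℝ) < ε/8 by linarith)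
  obtain ⟨q, hqdist, hqmarg, hqd, rfl⟩ := hrmem
  have hrlt' : mutInfo q < rateDist dE Q D + ε/8 := hrlt
  have hEbound : KL Q P + mutInfo q < perfSecExp P dE D + ε/4 := by linarith
  -- the mixing parameter
  set M : ℝ := 2 * ((Fintype.card X : ℝ) * (Fintype.card Z : ℝ)) with hMdef
  have hM0 : 0 ≤ M := by rw [hMdef]; positivity
  set t : ℝ := min (1/2) ((ε/8)/(M + |mutInfo q| + 1)) with htdef
  have htpos : 0 < t := lt_min (by norm_num) (by positivity)
  have htle : t ≤ 1/2 := min_le_left _ _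
  have ht1 : 0 < 1 - t := by linarith
  have htM : t * (M + |mutInfo q| + 1) ≤ ε/8 := by
    have h1 : t ≤ (ε/8)/(M + |mutInfo q| + 1) := min_le_right _ _
    have h2 : 0 < M + |mutInfo q| + 1 := by positivity
    calc t * (M + |mutInfo q| + 1) ≤ ((ε/8)/(M + |mutInfo q| + 1)) * (M + |mutInfo q| + 1) :=
        mul_le_mul_of_nonneg_right h1 (le_of_lt h2)
      _ = ε/8 := by field_simp
  -- mixed coupling
  set q' : X × Z → ℝ := fun p => (1 - t) * q p + t * q₀ p with hq'def
  have hq'0 : ∀ p, 0 ≤ q' p := fun p =>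
    add_nonneg (mul_nonneg ht1.le (hqdist.1 p)) (mul_nonneg htpos.le (hq₀0 p))
  have hq'sum : ∑ p : X × Z, q' p = 1 := by
    simp only [hq'def]
    rw [Finset.sum_add_distrib, ← Finset.mul_sum, ← Finset.mul_sum, hqdist.2, hq₀sum]; ring
  have hq'marg : ∀ a, ∑ b, q' (a, b) = Q a := by
    intro a
    simp only [hq'def]
    rw [Finset.sum_add_distrib, ← Finset.mul_sum, ← Finset.mul_sum, hqmarg a, hq₀marg a]; ring
  set r : Z → ℝ := fun b => ∑ a, q' (a, b) with hrdef
  have hr0 : ∀ b, 0 ≤ r b := fun b => Finset.sum_nonneg fun a _ => hq'0 _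
  have hrsum : ∑ b, r b = 1 := by
    simp only [hrdef]
    rw [← hq'sum, Fintype.sum_prod_type_right]
  have hq'leQ : ∀ p : X × Z, q' p ≤ Q p.1 := by
    rintro ⟨a, b⟩
    rw [← hq'marg a]
    exact Finset.single_le_sum (f := fun b' => q' (a, b')) (fun b' _ => hq'0 _)
      (Finset.mem_univ b)
  have hq'ler : ∀ p : X × Z, q' p ≤ r p.2 := by
    rintro ⟨a, b⟩
    exact Finset.single_le_sum (f := fun a' => q' (a', b)) (fun a' _ => hq'0 _)
      (Finset.mem_univ a)
  -- per-letter distortion and log-likelihood functions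
  set dfun : X × Z → ℝ := fun p => dE p.1 p.2 with hdfundef
  set ℓ : X × Z → ℝ :=
    fun p => if 0 < q' p then Real.logb 2 (q' p / (P p.1 * r p.2)) else 0 with hldef
  set μℓ : ℝ := ∑ p : X × Z, q' p * ℓ p with hμℓdef
  -- mean of ℓ decomposes
  have hsplitμ : μℓ = (∑ p : X × Z, q' p * Real.logb 2 (q' p / (Q p.1 * r p.2))) + KL Q P := by
    have hpt : ∀ p : X × Z, q' p * ℓ p
        = q' p * Real.logb 2 (q' p / (Q p.1 * r p.2)) + q' p * Real.logb 2 (Q p.1 / P p.1) := by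
      intro p
      rcases eq_or_lt_of_le (hq'0 p) with h0 | hpos
      · rw [← h0]; ring
      · have hQp : 0 < Q p.1 := lt_of_lt_of_le hpos (hq'leQ p)
        have hrp : 0 < r p.2 := lt_of_lt_of_le hpos (hq'ler p)
        have hPp : 0 < P p.1 := hPfull _
        rw [hldef]
        dsimp only
        rw [if_pos hpos, ← mul_add]
        congr 1
        rw [← Real.logb_mul (by positivity) (by positivity)]
        congr 1
        field_simp
      
    rw [hμℓdef, Finset.sum_congr rfl (fun p _ => hpt p), Finset.sum_add_distrib]
    congr 1
    rw [Fintype.sum_prod_type]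
    unfold KL
    refine Finset.sum_congr rfl fun a _ => ?_
    dsimp only
    rw [← Finset.sum_mul, hq'marg a]
  -- log-sum bound on the information part
  have hqZpt : ∀ b, r b = (1-t) * (∑ a, q (a, b)) + t * (∑ a, q₀ (a, b)) := by
    intro b
    simp only [hrdef, hq'def]
    rw [Finset.sum_add_distrib, ← Finset.mul_sum, ← Finset.mul_sum]
  have hIq : mutInfo q = ∑ p : X × Z, q p * Real.logb 2 (q p / (Q p.1 * (∑ a, q (a, p.2)))) := by
    unfold mutInfo
    exact Finset.sum_congr rfl fun p _ => by rw [hqmarg p.1]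
  have hIq₀ : mutInfo q₀ = ∑ p : X × Z, q₀ p * Real.logb 2 (q₀ p / (Q p.1 * (∑ a, q₀ (a, p.2)))) := by
    unfold mutInfo
    exact Finset.sum_congr rfl fun p _ => by rw [hq₀marg p.1]
  have hIbound : (∑ p : X × Z, q' p * Real.logb 2 (q' p / (Q p.1 * r p.2)))
      ≤ (1-t) * mutInfo q + t * mutInfo q₀ := by
    have hpt : ∀ p : X × Z, q' p * Real.logb 2 (q' p / (Q p.1 * r p.2))
        ≤ (1-t) * (q p * Real.logb 2 (q p / (Q p.1 * (∑ a, q (a, p.2)))))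
          + t * (q₀ p * Real.logb 2 (q₀ p / (Q p.1 * (∑ a, q₀ (a, p.2))))) := by
      rintro ⟨a, b⟩
      have hside1 : (1-t) * q (a, b) = 0 ∨ 0 < (1-t) * (Q a * (∑ a', q (a', b))) := by
        rcases eq_or_lt_of_le (hqdist.1 (a, b)) with h0 | hpos
        · exact Or.inl (by rw [← h0, mul_zero])
        · refine Or.inr (mul_pos ht1 (mul_pos ?_ ?_))
          · calc (0:ℝ) < q (a, b) := hpos
              _ ≤ ∑ b', q (a, b') := Finset.single_le_sum (f := fun b' => q (a, b'))
                  (fun b' _ => hqdist.1 _) (Finset.mem_univ b)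
              _ = Q a := hqmarg a
          · calc (0:ℝ) < q (a, b) := hpos
              _ ≤ ∑ a', q (a', b) := Finset.single_le_sum (f := fun a' => q (a', b))
                  (fun a' _ => hqdist.1 _) (Finset.mem_univ a)
      have hside2 : t * q₀ (a, b) = 0 ∨ 0 < t * (Q a * (∑ a', q₀ (a', b))) := by
        rcases eq_or_lt_of_le (hq₀0 (a, b)) with h0 | hpos
        · exact Or.inl (by rw [← h0, mul_zero])
        · refine Or.inr (mul_pos htpos (mul_pos ?_ ?_))
          · calc (0:ℝ) < q₀ (a, b) := hpos
              _ ≤ ∑ b', q₀ (a, b') := Finset.single_le_sum (f := fun b' => q₀ (a, b'))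
                  (fun b' _ => hq₀0 _) (Finset.mem_univ b)
              _ = Q a := hq₀marg a
          · calc (0:ℝ) < q₀ (a, b) := hpos
              _ ≤ ∑ a', q₀ (a', b) := Finset.single_le_sum (f := fun a' => q₀ (a', b))
                  (fun a' _ => hq₀0 _) (Finset.mem_univ a)
      have happ := logSum2 (u₁ := (1-t) * q (a, b)) (u₂ := t * q₀ (a, b))
        (v₁ := (1-t) * (Q a * (∑ a', q (a', b)))) (v₂ := t * (Q a * (∑ a', q₀ (a', b))))
        (mul_nonneg ht1.le (hqdist.1 _)) (mul_nonneg htpos.le (hq₀0 _))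
        (mul_nonneg ht1.le (mul_nonneg (hQ.1 _)
          (Finset.sum_nonneg fun a' _ => hqdist.1 _)))
        (mul_nonneg htpos.le (mul_nonneg (hQ.1 _)
          (Finset.sum_nonneg fun a' _ => hq₀0 _)))
        hside1 hside2
      have e1 : (1-t) * q (a, b) + t * q₀ (a, b) = q' (a, b) := by rw [hq'def]
      have e2 : (1-t) * (Q a * (∑ a', q (a', b))) + t * (Q a * (∑ a', q₀ (a', b)))
          = Q a * r b := by rw [hqZpt b]; ring
      rw [e1, e2, mul_div_mul_left _ _ (ne_of_gt ht1), mul_div_mul_left _ _ (ne_of_gt htpos)]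
        at happ
      calc q' (a, b) * Real.logb 2 (q' (a, b) / (Q a * r b))
          ≤ (1-t) * q (a, b) * Real.logb 2 (q (a, b) / (Q a * (∑ a', q (a', b))))
            + t * q₀ (a, b) * Real.logb 2 (q₀ (a, b) / (Q a * (∑ a', q₀ (a', b)))) := happ
        _ = (1-t) * (q (a, b) * Real.logb 2 (q (a, b) / (Q a * (∑ a', q (a', b)))))
            + t * (q₀ (a, b) * Real.logb 2 (q₀ (a, b) / (Q a * (∑ a', q₀ (a', b))))) := by ring
    calc (∑ p : X × Z, q' p * Real.logb 2 (q' p / (Q p.1 * r p.2)))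
        ≤ ∑ p : X × Z, ((1-t) * (q p * Real.logb 2 (q p / (Q p.1 * (∑ a, q (a, p.2)))))
          + t * (q₀ p * Real.logb 2 (q₀ p / (Q p.1 * (∑ a, q₀ (a, p.2)))))) :=
          Finset.sum_le_sum fun p _ => hpt p
      _ = (1-t) * mutInfo q + t * mutInfo q₀ := by
          rw [Finset.sum_add_distrib, ← Finset.mul_sum, ← Finset.mul_sum, hIq, hIq₀]
  -- crude bound on mutInfo q₀
  have hIq₀bd : mutInfo q₀ ≤ M := by
    rw [hIq₀]
    have hterm : ∀ p : X × Z,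
        q₀ p * Real.logb 2 (q₀ p / (Q p.1 * (∑ a, q₀ (a, p.2)))) ≤ 2 := by
      rintro ⟨a, b⟩
      dsimp only
      rcases eq_or_lt_of_le (hq₀0 (a, b)) with h0 | hpos
      · rw [← h0, zero_mul]; norm_num
      · have hbg : b = g a := by
          by_contra hbg
          rw [hq₀def] at hpos
          dsimp only at hpos
          rw [if_neg hbg] at hpos
          exact lt_irrefl _ hpos
        have hq₀ab : q₀ (a, b) = Q a := by rw [hq₀def]; dsimp only; rw [if_pos hbg]
        have hQa : 0 < Q a := by rw [← hq₀ab]; exact hpos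
        have hmZ : Q a ≤ ∑ a', q₀ (a', b) := by
          have h := Finset.single_le_sum (f := fun a' => q₀ (a', b))
            (fun a' _ => hq₀0 _) (Finset.mem_univ a)
          simpa only [hq₀ab] using h
        have hmZpos : 0 < ∑ a', q₀ (a', b) := lt_of_lt_of_le hQa hmZ
        rw [hq₀ab]
        have e : Q a / (Q a * (∑ a', q₀ (a', b))) = ((∑ a', q₀ (a', b)))⁻¹ := by
          field_simp
        rw [e]
        calc Q a * Real.logb 2 ((∑ a', q₀ (a', b)))⁻¹ ≤ Q a * Real.logb 2 (Q a)⁻¹ := by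
              refine mul_le_mul_of_nonneg_left ?_ (hQ.1 a)
              refine Real.logb_le_logb_of_le one_lt_two (by positivity) ?_
              exact inv_anti₀ hQa hmZ
          _ ≤ 2 := mul_logb_inv_le hQa
    calc (∑ p : X × Z, q₀ p * Real.logb 2 (q₀ p / (Q p.1 * (∑ a, q₀ (a, p.2)))))
        ≤ ∑ _p : X × Z, (2:ℝ) := Finset.sum_le_sum fun p _ => hterm p
      _ = M := by
          rw [Finset.sum_const, Finset.card_univ, Fintype.card_prod, nsmul_eq_mul, hMdef]
          push_cast
          ring
  -- final mean bound
  have hμℓbd : μℓ < perfSecExp P dE D + ε/4 + ε/8 := by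
    have h1 : t * (M - mutInfo q) ≤ t * (M + |mutInfo q| + 1) :=
      mul_le_mul_of_nonneg_left (by linarith [neg_abs_le (mutInfo q)]) htpos.le
    have h2 : (1-t) * mutInfo q + t * mutInfo q₀ ≤ mutInfo q + ε/8 := by
      have h3 : t * mutInfo q₀ ≤ t * M := mul_le_mul_of_nonneg_left hIq₀bd htpos.le
      nlinarith
    rw [hsplitμ]
    linarith
  set c : ℝ := μℓ + ε/8 with hcdef
  have hcbd : c < perfSecExp P dE D + ε/2 := by rw [hcdef]; linarith
  -- Chebyshev for ℓ
  have hfailℓ : ∃ Nl : ℕ, ∀ n, Nl ≤ n → 0 < n →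
      (∑ ω : Fin n → X × Z, (∏ i, q' (ω i)) * ind (c < (n:ℝ)⁻¹ * ∑ i, ℓ (ω i))) ≤ 1/4 := by
    obtain ⟨N0, hN0⟩ := div_le_quarter_eventually
      (V := ∑ p : X × Z, q' p * (ℓ p - μℓ)^2) (s := (ε/8)^2)
      (Finset.sum_nonneg fun p _ => mul_nonneg (hq'0 p) (sq_nonneg _)) (by positivity)
    refine ⟨N0, fun n hn hn0 => ?_⟩
    have hch := cheb q' ℓ hq'0 hq'sum c (by rw [hcdef, ← hμℓdef]; linarith) hn0
    rw [← hμℓdef] at hch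
    refine le_trans hch ?_
    rw [show c - μℓ = ε/8 by rw [hcdef]; ring]
    exact hN0 n hn hn0
  -- Chebyshev (or triviality) for the distortion
  have hqd' : (∑ p : X × Z, q p * dfun p) ≤ D := by
    simp only [hdfundef]; exact hqd
  have hq₀d' : (∑ p : X × Z, q₀ p * dfun p) = 0 := by
    simp only [hdfundef]; exact hq₀d
  have hdmean : (∑ p : X × Z, q' p * dfun p) = (1-t) * ∑ p : X × Z, q p * dfun p := by
    calc ∑ p : X × Z, q' p * dfun p
        = ∑ p : X × Z, ((1-t) * (q p * dfun p) + t * (q₀ p * dfun p)) := by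
          refine Finset.sum_congr rfl fun p _ => ?_
          simp only [hq'def]
          ring
      _ = (1-t) * (∑ p : X × Z, q p * dfun p) + t * (∑ p : X × Z, q₀ p * dfun p) := by
          rw [Finset.sum_add_distrib, ← Finset.mul_sum, ← Finset.mul_sum]
      _ = (1-t) * ∑ p : X × Z, q p * dfun p := by rw [hq₀d', mul_zero, add_zero]
  have hdnonneg : ∀ p : X × Z, 0 ≤ dfun p := by
    rintro ⟨a, b⟩; simp only [hdfundef]; exact hdE0 a b
  have hfaild : ∃ Nd : ℕ, ∀ n, Nd ≤ n → 0 < n →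
      (∑ ω : Fin n → X × Z, (∏ i, q' (ω i)) * ind (D < (n:ℝ)⁻¹ * ∑ i, dfun (ω i))) ≤ 1/4 := by
    rcases eq_or_lt_of_le hD with hD0 | hDpos
    · -- D = 0 : the event is impossible on the support of q'
      refine ⟨0, fun n _ _ => ?_⟩
      have hzero : ∀ ω : Fin n → X × Z,
          (∏ i, q' (ω i)) * ind (D < (n:ℝ)⁻¹ * ∑ i, dfun (ω i)) = 0 := by
        intro ω
        rcases eq_or_ne (∏ i, q' (ω i)) 0 with hp0 | hpne
        · rw [hp0, zero_mul]
        · have hqposi : ∀ i, 0 < q' (ω i) := fun i =>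
            lt_of_le_of_ne (hq'0 _) (Ne.symm (Finset.prod_ne_zero_iff.mp hpne i (Finset.mem_univ i)))
          have hqdz : ∑ p : X × Z, q p * dfun p = 0 := by
            refine le_antisymm (by rw [← hD0] at hqd'; exact hqd') ?_
            exact Finset.sum_nonneg fun p _ => mul_nonneg (hqdist.1 p) (hdnonneg p)
          have hd0 : ∀ p : X × Z, 0 < q' p → dfun p = 0 := by
            intro p hp
            by_cases hqp : q p = 0
            · have hq₀p : q₀ p ≠ 0 := by
                intro h0
                simp only [hq'def] at hp
                rw [hqp, h0, mul_zero, mul_zero, add_zero] at hp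
                exact lt_irrefl _ hp
              obtain ⟨a, b⟩ := p
              have hbg : b = g a := by
                by_contra hbg
                exact hq₀p (by simp only [hq₀def]; rw [if_neg hbg])
              simp only [hdfundef]
              rw [hbg]
              exact hg a
            · have := (Finset.sum_eq_zero_iff_of_nonneg
                (fun p _ => mul_nonneg (hqdist.1 p) (hdnonneg p))).mp hqdz p (Finset.mem_univ p)
              rcases mul_eq_zero.mp this with h | h
              · exact absurd h hqp
              · exact h
          have hsum0 : ∑ i, dfun (ω i) = 0 :=
            Finset.sum_eq_zero fun i _ => hd0 (ω i) (hqposi i)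
          rw [hsum0, mul_zero, ind_of_not (by rw [← hD0]; exact lt_irrefl 0), mul_zero]
      rw [Finset.sum_eq_zero fun ω _ => hzero ω]
      norm_num
    · -- D > 0 : Chebyshev
      have hmean : (∑ p : X × Z, q' p * dfun p) < D := by
        rw [hdmean]
        have h1 : (∑ p : X × Z, q p * dfun p) ≤ D := hqd'
        have h2 : (1-t) * (∑ p : X × Z, q p * dfun p) ≤ (1-t) * D :=
          mul_le_mul_of_nonneg_left h1 ht1.le
        nlinarith
      obtain ⟨N0, hN0⟩ := div_le_quarter_eventually
        (V := ∑ p : X × Z, q' p * (dfun p - ∑ p' : X × Z, q' p' * dfun p')^2)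
        (s := (D - ∑ p : X × Z, q' p * dfun p)^2)
        (Finset.sum_nonneg fun p _ => mul_nonneg (hq'0 p) (sq_nonneg _))
        (by have := sub_pos.mpr hmean; positivity)
      refine ⟨N0, fun n hn hn0 => ?_⟩
      exact le_trans (cheb q' dfun hq'0 hq'sum D hmean hn0) (hN0 n hn hn0)
  obtain ⟨Nl, hNl⟩ := hfailℓ
  obtain ⟨Nd, hNd⟩ := hfaild
  refine ⟨max (max Nl Nd) (⌈2/ε⌉₊ + 1), fun n hn hn0 => ?_⟩
  have hnR : (0:ℝ) < n := by exact_mod_cast hn0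
  have hnl : Nl ≤ n := le_trans (le_trans (le_max_left _ _) (le_max_left _ _)) hn
  have hnd : Nd ≤ n := le_trans (le_trans (le_max_right _ _) (le_max_left _ _)) hn
  have hnε : 1 ≤ (n:ℝ) * (ε/2) := by
    have h1 : (⌈2/ε⌉₊ : ℝ) ≤ n := by
      exact_mod_cast le_trans (le_trans (Nat.le_succ _) (le_max_right _ _)) hn
    have h2 : 2/ε ≤ (n:ℝ) := le_trans (Nat.le_ceil _) h1
    rw [div_le_iff₀ hε] at h2
    nlinarith
  -- probability of the good set
  have hgood : 1/2 ≤ ∑ ω : Fin n → X × Z, (∏ i, q' (ω i)) *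
      ind ((n:ℝ)⁻¹ * ∑ i, dfun (ω i) ≤ D ∧ (n:ℝ)⁻¹ * ∑ i, ℓ (ω i) ≤ c) := by
    have hpt : ∀ ω : Fin n → X × Z,
        (∏ i, q' (ω i)) * (1 - ind (D < (n:ℝ)⁻¹ * ∑ i, dfun (ω i))
          - ind (c < (n:ℝ)⁻¹ * ∑ i, ℓ (ω i)))
        ≤ (∏ i, q' (ω i)) *
          ind ((n:ℝ)⁻¹ * ∑ i, dfun (ω i) ≤ D ∧ (n:ℝ)⁻¹ * ∑ i, ℓ (ω i) ≤ c) := by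
      intro ω
      refine mul_le_mul_of_nonneg_left ?_ (Finset.prod_nonneg fun i _ => hq'0 _)
      refine one_sub_ind_le ?_
      intro hnc
      by_contra hbc
      push_neg at hbc
      exact hnc hbc
    refine le_trans ?_ (Finset.sum_le_sum fun ω _ => hpt ω)
    have hexp : ∑ ω : Fin n → X × Z, (∏ i, q' (ω i)) *
        (1 - ind (D < (n:ℝ)⁻¹ * ∑ i, dfun (ω i)) - ind (c < (n:ℝ)⁻¹ * ∑ i, ℓ (ω i)))
        = (∑ ω : Fin n → X × Z, ∏ i, q' (ω i))
          - (∑ ω : Fin n → X × Z, (∏ i, q' (ω i)) * ind (D < (n:ℝ)⁻¹ * ∑ i, dfun (ω i)))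
          - (∑ ω : Fin n → X × Z, (∏ i, q' (ω i)) * ind (c < (n:ℝ)⁻¹ * ∑ i, ℓ (ω i))) := by
      rw [← Finset.sum_sub_distrib, ← Finset.sum_sub_distrib]
      refine Finset.sum_congr rfl fun ω _ => ?_
      ring
    rw [hexp, sum_prod_dist q' hq'sum]
    have h1 := hNd n hnd hn0
    have h2 := hNl n hnl hn0
    linarith
  -- change of measure
  set aP : X × Z → ℝ := fun p => P p.1 * r p.2 with haPdef
  have haP0 : ∀ p, 0 ≤ aP p := by
    rintro ⟨a, b⟩; simp only [haPdef]; exact mul_nonneg (hPfull a).le (hr0 b)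
  have hpoint : ∀ ω : Fin n → X × Z,
      (2:ℝ) ^ (-((n:ℝ)*c)) * ((∏ i, q' (ω i)) *
        ind ((n:ℝ)⁻¹ * ∑ i, dfun (ω i) ≤ D ∧ (n:ℝ)⁻¹ * ∑ i, ℓ (ω i) ≤ c))
      ≤ (∏ i, aP (ω i)) * ind ((n:ℝ)⁻¹ * ∑ i, dfun (ω i) ≤ D) := by
    intro ω
    by_cases hcon : ((n:ℝ)⁻¹ * ∑ i, dfun (ω i) ≤ D ∧ (n:ℝ)⁻¹ * ∑ i, ℓ (ω i) ≤ c)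
    · rcases eq_or_lt_of_le (Finset.prod_nonneg fun i _ => hq'0 (ω i) :
          (0:ℝ) ≤ ∏ i, q' (ω i)) with hp0 | hppos
      · rw [← hp0, zero_mul, mul_zero]
        exact mul_nonneg (Finset.prod_nonneg fun i _ => haP0 _) (ind_nonneg _)
      · rw [ind_of hcon, mul_one, ind_of hcon.1, mul_one]
        have hqposi : ∀ i, 0 < q' (ω i) := fun i =>
          lt_of_le_of_ne (hq'0 _)
            (Ne.symm (Finset.prod_ne_zero_iff.mp (ne_of_gt hppos) i (Finset.mem_univ i)))
        have haiq : ∀ i, aP (ω i) = q' (ω i) * (2:ℝ) ^ (-(ℓ (ω i))) := by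
          intro i
          have hrp : 0 < r (ω i).2 := lt_of_lt_of_le (hqposi i) (hq'ler (ω i))
          have hPp : 0 < P (ω i).1 := hPfull _
          have hℓi : ℓ (ω i) = Real.logb 2 (q' (ω i) / (P (ω i).1 * r (ω i).2)) := by
            rw [hldef]; dsimp only; rw [if_pos (hqposi i)]
          rw [hℓi, Real.rpow_neg (by norm_num),
            Real.rpow_logb two_pos (by norm_num)
              (div_pos (hqposi i) (mul_pos hPp hrp)), haPdef]
          dsimp only
          rw [inv_div, mul_comm (q' (ω i)) _, div_mul_cancel₀ _ (ne_of_gt (hqposi i))]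
        have hprod : ∏ i, aP (ω i) = (∏ i, q' (ω i)) * (2:ℝ) ^ (-(∑ i, ℓ (ω i))) := by
          rw [Finset.prod_congr rfl (fun i _ => haiq i), Finset.prod_mul_distrib]
          congr 1
          rw [show -(∑ i, ℓ (ω i)) = ∑ i, (-(ℓ (ω i))) by rw [← Finset.sum_neg_distrib],
            rpow_sum_helper]
        rw [hprod, mul_comm ((2:ℝ) ^ (-((n:ℝ)*c)))]
        refine mul_le_mul_of_nonneg_left ?_ hppos.le
        refine (Real.rpow_le_rpow_left_iff one_lt_two).mpr ?_
        have h2 := hcon.2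
        rw [inv_mul_le_iff₀ hnR] at h2
        linarith
    · rw [ind_of_not hcon, mul_zero, mul_zero]
      exact mul_nonneg (Finset.prod_nonneg fun i _ => haP0 _) (ind_nonneg _)
  have hsum1 : (2:ℝ) ^ (-((n:ℝ)*c)) * (1/2)
      ≤ ∑ ω : Fin n → X × Z, (∏ i, aP (ω i)) * ind ((n:ℝ)⁻¹ * ∑ i, dfun (ω i) ≤ D) := by
    calc (2:ℝ) ^ (-((n:ℝ)*c)) * (1/2)
        ≤ (2:ℝ) ^ (-((n:ℝ)*c)) * ∑ ω : Fin n → X × Z, (∏ i, q' (ω i)) *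
            ind ((n:ℝ)⁻¹ * ∑ i, dfun (ω i) ≤ D ∧ (n:ℝ)⁻¹ * ∑ i, ℓ (ω i) ≤ c) :=
          mul_le_mul_of_nonneg_left hgood (Real.rpow_nonneg (by norm_num) _)
      _ = ∑ ω : Fin n → X × Z, (2:ℝ) ^ (-((n:ℝ)*c)) * ((∏ i, q' (ω i)) *
            ind ((n:ℝ)⁻¹ * ∑ i, dfun (ω i) ≤ D ∧ (n:ℝ)⁻¹ * ∑ i, ℓ (ω i) ≤ c)) :=
          Finset.mul_sum _ _ _
      _ ≤ ∑ ω : Fin n → X × Z, (∏ i, aP (ω i)) * ind ((n:ℝ)⁻¹ * ∑ i, dfun (ω i) ≤ D) :=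
          Finset.sum_le_sum fun ω _ => hpoint ω
  -- split the pair sum
  have hsplit : ∑ ω : Fin n → X × Z, (∏ i, aP (ω i)) * ind ((n:ℝ)⁻¹ * ∑ i, dfun (ω i) ≤ D)
      = ∑ z : Fin n → Z, (∏ i, r (z i)) *
          (∑ x : Fin n → X, (∏ i, P (x i)) * ind (seqDist dE x z ≤ D)) := by
    rw [← Equiv.sum_comp (Equiv.arrowProdEquivProdArrow (Fin n) (fun _ => X) (fun _ => Z)).symm
      (fun ω => (∏ i, aP (ω i)) * ind ((n:ℝ)⁻¹ * ∑ i, dfun (ω i) ≤ D))]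
    rw [Fintype.sum_prod_type, Finset.sum_comm]
    refine Finset.sum_congr rfl fun z _ => ?_
    rw [Finset.mul_sum]
    refine Finset.sum_congr rfl fun x _ => ?_
    have harg : ∀ i : Fin n, ((Equiv.arrowProdEquivProdArrow (Fin n) (fun _ => X) (fun _ => Z)).symm (x, z)) i
        = (x i, z i) := fun i => rfl
    simp only [harg, haPdef, hdfundef, seqDist]
    rw [Finset.prod_mul_distrib]
    ring
  -- choose the best z
  obtain ⟨zstar, _, hzmax⟩ := Finset.exists_max_image Finset.univ
    (fun z : Fin n → Z => ∑ x : Fin n → X, (∏ i, P (x i)) * ind (seqDist dE x z ≤ D))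
    ⟨Classical.arbitrary _, Finset.mem_univ _⟩
  refine ⟨zstar, ?_⟩
  have havg : ∑ z : Fin n → Z, (∏ i, r (z i)) *
      (∑ x : Fin n → X, (∏ i, P (x i)) * ind (seqDist dE x z ≤ D))
      ≤ ∑ x : Fin n → X, (∏ i, P (x i)) * ind (seqDist dE x zstar ≤ D) := by
    calc ∑ z : Fin n → Z, (∏ i, r (z i)) *
        (∑ x : Fin n → X, (∏ i, P (x i)) * ind (seqDist dE x z ≤ D))
        ≤ ∑ z : Fin n → Z, (∏ i, r (z i)) *
          (∑ x : Fin n → X, (∏ i, P (x i)) * ind (seqDist dE x zstar ≤ D)) := by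
          refine Finset.sum_le_sum fun z _ => ?_
          exact mul_le_mul_of_nonneg_left (hzmax z (Finset.mem_univ z))
            (Finset.prod_nonneg fun i _ => hr0 _)
      _ = ∑ x : Fin n → X, (∏ i, P (x i)) * ind (seqDist dE x zstar ≤ D) := by
          rw [← Finset.sum_mul, sum_prod_dist r hrsum, one_mul]
  have hfirst : (2:ℝ) ^ (-((n:ℝ) * (perfSecExp P dE D + ε))) ≤ (2:ℝ) ^ (-((n:ℝ)*c)) * (1/2) := by
    have h12 : (1/2 : ℝ) = (2:ℝ) ^ (-1 : ℝ) := by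
      rw [Real.rpow_neg_one]
      norm_num
    rw [h12, ← Real.rpow_add two_pos]
    refine (Real.rpow_le_rpow_left_iff one_lt_two).mpr ?_
    have h1 : (n:ℝ) * c ≤ (n:ℝ) * (perfSecExp P dE D + ε/2) :=
      mul_le_mul_of_nonneg_left hcbd.le hnR.le
    have key : (n:ℝ)*c + 1 ≤ (n:ℝ)*(perfSecExp P dE D + ε) := by
      calc (n:ℝ)*c + 1 ≤ (n:ℝ)*(perfSecExp P dE D + ε/2) + (n:ℝ)*(ε/2) := by linarith
        _ = (n:ℝ)*(perfSecExp P dE D + ε) := by ring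
    linarith [key]
  calc (2:ℝ) ^ (-((n:ℝ) * (perfSecExp P dE D + ε))) ≤ (2:ℝ) ^ (-((n:ℝ)*c)) * (1/2) := hfirst
    _ ≤ ∑ ω : Fin n → X × Z, (∏ i, aP (ω i)) * ind ((n:ℝ)⁻¹ * ∑ i, dfun (ω i) ≤ D) := hsum1
    _ = ∑ z : Fin n → Z, (∏ i, r (z i)) *
        (∑ x : Fin n → X, (∏ i, P (x i)) * ind (seqDist dE x z ≤ D)) := hsplit
    _ ≤ ∑ x : Fin n → X, (∏ i, P (x i)) * ind (seqDist dE x zstar ≤ D) := havg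
lemma count_prefix (K mm : ℕ) (hm : mm ≤ K) :
    (2:ℝ)^(K - mm) ≤ ∑ u : Fin K → Bool, ind (∀ i : Fin K, (i:ℕ) < mm → u i = false) := by
  classical
  set J : (Fin (K - mm) → Bool) → (Fin K → Bool) :=
    fun v i => if h : mm ≤ (i:ℕ) then v ⟨(i:ℕ) - mm, by omega⟩ else false with hJdef
  have hJinj : Function.Injective J := by
    intro v v' hvv
    funext j
    have h1 := congrFun hvv ⟨mm + (j:ℕ), by omega⟩
    simp only [hJdef] at h1
    rw [dif_pos (Nat.le_add_right _ _), dif_pos (Nat.le_add_right _ _)] at h1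
    simpa [Nat.add_sub_cancel_left] using h1
  have hmem : ∀ v, ∀ i : Fin K, (i:ℕ) < mm → (J v) i = false := by
    intro v i hi
    simp only [hJdef]
    rw [dif_neg (by omega)]
  calc (2:ℝ)^(K - mm)
      = ((Fintype.card (Fin (K - mm) → Bool) : ℕ) : ℝ) := by
        rw [Fintype.card_fun]
        push_cast
        simp
    _ = ∑ u ∈ Finset.univ.image J, (1:ℝ) := by
        rw [Finset.sum_const, Finset.card_image_of_injective _ hJinj, Finset.card_univ,
          nsmul_eq_mul, mul_one]
    _ = ∑ u ∈ Finset.univ.image J, ind (∀ i : Fin K, (i:ℕ) < mm → u i = false) := by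
        refine Finset.sum_congr rfl fun u hu => ?_
        obtain ⟨v, _, rfl⟩ := Finset.mem_image.mp hu
        rw [ind_of (hmem v)]
    _ ≤ ∑ u : Fin K → Bool, ind (∀ i : Fin K, (i:ℕ) < mm → u i = false) :=
        Finset.sum_le_sum_of_subset_of_nonneg (Finset.subset_univ _)
          (fun u _ _ => ind_nonneg _)

lemma pow_sub_inv (K mm : ℕ) (hm : mm ≤ K) :
    ((2:ℝ)^(K:ℕ))⁻¹ * (2:ℝ)^(K - mm) = (2:ℝ)^(-(mm:ℝ)) := by
  have h1 : ((2:ℝ)^(K:ℕ)) = (2:ℝ)^((K:ℕ):ℝ) := (Real.rpow_natCast 2 K).symm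
  have h2 : ((2:ℝ)^(K-mm)) = (2:ℝ)^(((K-mm:ℕ)):ℝ) := (Real.rpow_natCast 2 (K-mm)).symm
  rw [h1, h2, ← Real.rpow_neg (by norm_num), ← Real.rpow_add two_pos]
  congr 1
  rw [Nat.cast_sub hm]
  ring

/-- The adversary's maximal success probability (the quantity inside the logarithm). -/
def supval {𝓧 𝓩 : Type*} [Fintype 𝓧] [Fintype 𝓩] (P : 𝓧 → ℝ) (dE : 𝓧 → 𝓩 → ℝ) (D : ℝ)
    (n mn Kn : ℕ) (fn : (Fin n → 𝓧) → (ℕ → Bool) → Fin mn) : ℝ :=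
  ⨆ σ : Fin mn → (Fin n → 𝓩),
    ((2 : ℝ) ^ (Kn : ℕ))⁻¹ *
      ∑ u : Fin Kn → Bool,
        ∑ x : Fin n → 𝓧, (∏ i, P (x i)) *
          ind (seqDist dE x (σ (fn x (extKey u))) ≤ D)

section supvalFacts

variable {𝓧 𝓩 : Type*} [Fintype 𝓧] [Fintype 𝓩] [Nonempty 𝓩]
  (P : 𝓧 → ℝ) (dE : 𝓧 → 𝓩 → ℝ) (D : ℝ) (n mn Kn : ℕ)
  (fn : (Fin n → 𝓧) → (ℕ → Bool) → Fin mn)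

lemma le_supval (σ : Fin mn → (Fin n → 𝓩)) :
    ((2 : ℝ) ^ (Kn : ℕ))⁻¹ *
      ∑ u : Fin Kn → Bool,
        ∑ x : Fin n → 𝓧, (∏ i, P (x i)) *
          ind (seqDist dE x (σ (fn x (extKey u))) ≤ D) ≤ supval P dE D n mn Kn fn := by
  unfold supval
  exact le_ciSup (f := fun σ : Fin mn → (Fin n → 𝓩) =>
    ((2 : ℝ) ^ (Kn : ℕ))⁻¹ * ∑ u : Fin Kn → Bool, ∑ x : Fin n → 𝓧, (∏ i, P (x i)) *
      ind (seqDist dE x (σ (fn x (extKey u))) ≤ D))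
    (Set.Finite.bddAbove (Set.finite_range _)) σ

lemma supval_nonneg (hP0 : ∀ a, 0 ≤ P a) : 0 ≤ supval P dE D n mn Kn fn := by
  have σ₀ : Fin mn → (Fin n → 𝓩) := fun _ _ => Classical.arbitrary 𝓩
  refine le_trans ?_ (le_supval P dE D n mn Kn fn σ₀)
  refine mul_nonneg (by positivity) ?_
  refine Finset.sum_nonneg fun u _ => Finset.sum_nonneg fun x _ => ?_
  exact mul_nonneg (Finset.prod_nonneg fun i _ => hP0 _) (ind_nonneg _)

lemma supval_le_one (hP : IsDist P) : supval P dE D n mn Kn fn ≤ 1 := by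
  refine Real.iSup_le (fun σ => ?_) zero_le_one
  have h1 : ∑ u : Fin Kn → Bool,
      ∑ x : Fin n → 𝓧, (∏ i, P (x i)) * ind (seqDist dE x (σ (fn x (extKey u))) ≤ D)
      ≤ ∑ _u : Fin Kn → Bool, (1:ℝ) := by
    refine Finset.sum_le_sum fun u _ => ?_
    calc ∑ x : Fin n → 𝓧, (∏ i, P (x i)) * ind (seqDist dE x (σ (fn x (extKey u))) ≤ D)
        ≤ ∑ x : Fin n → 𝓧, ∏ i, P (x i) := by
          refine Finset.sum_le_sum fun x _ => ?_
          calc (∏ i, P (x i)) * ind (seqDist dE x (σ (fn x (extKey u))) ≤ D)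
              ≤ (∏ i, P (x i)) * 1 :=
                mul_le_mul_of_nonneg_left (ind_le_one _)
                  (Finset.prod_nonneg fun i _ => hP.1 _)
            _ = ∏ i, P (x i) := mul_one _
      _ = 1 := sum_prod_dist P hP.2
  have h2 : ∑ _u : Fin Kn → Bool, (1:ℝ) = (2:ℝ)^(Kn : ℕ) := by
    rw [Finset.sum_const, Finset.card_univ, Fintype.card_fun, nsmul_eq_mul, mul_one]
    push_cast
    simp
  calc ((2 : ℝ) ^ (Kn : ℕ))⁻¹ * ∑ u : Fin Kn → Bool,
      ∑ x : Fin n → 𝓧, (∏ i, P (x i)) * ind (seqDist dE x (σ (fn x (extKey u))) ≤ D)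
      ≤ ((2 : ℝ) ^ (Kn : ℕ))⁻¹ * (2:ℝ)^(Kn : ℕ) := by
        rw [← h2]
        exact mul_le_mul_of_nonneg_left h1 (by positivity)
    _ = 1 := inv_mul_cancel₀ (by positivity)

lemma const_le_supval (hP : IsDist P) (z : Fin n → 𝓩) :
    (∑ x : Fin n → 𝓧, (∏ i, P (x i)) * ind (seqDist dE x z ≤ D))
      ≤ supval P dE D n mn Kn fn := by
  refine le_trans (le_of_eq ?_) (le_supval P dE D n mn Kn fn (fun _ => z))
  have hcard : ((Fintype.card (Fin Kn → Bool) : ℕ) : ℝ) = (2:ℝ)^(Kn:ℕ) := by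
    rw [Fintype.card_fun]
    push_cast
    simp
  rw [Finset.sum_const, Finset.card_univ, nsmul_eq_mul, hcard, ← mul_assoc,
    inv_mul_cancel₀ (by positivity : ((2:ℝ)^(Kn:ℕ)) ≠ 0), one_mul]

end supvalFacts
lemma exists_pos_eventually_le_of_liminf {b : ℕ → ℝ} {Ec : ℝ} (hEc : 0 < Ec)
    (h : Ec ≤ Filter.liminf b Filter.atTop) :
    ∃ a : ℝ, 0 < a ∧ ∀ᶠ n in Filter.atTop, a ≤ b n := by
  rw [Filter.liminf_eq] at h
  have hne : {a : ℝ | ∀ᶠ n in Filter.atTop, a ≤ b n}.Nonempty := by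
    by_contra hcon
    rw [Set.not_nonempty_iff_eq_empty] at hcon
    rw [hcon, Real.sSup_empty] at h
    linarith
  obtain ⟨a, ha_mem, ha_pos⟩ := exists_lt_of_lt_csSup hne (lt_of_lt_of_le hEc h)
  exact ⟨a, ha_pos, ha_mem⟩

lemma prob_le_of_exponent_ge {Pb : ℝ} (hPb0 : 0 ≤ Pb) {n : ℕ} (hn : 0 < n) {a : ℝ}
    (h : a ≤ -(n:ℝ)⁻¹ * Real.logb 2 Pb) : Pb ≤ (2:ℝ)^(-((n:ℝ)*a)) := by
  rcases eq_or_lt_of_le hPb0 with h0 | hpos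
  · rw [← h0]; positivity
  · have hnR : (0:ℝ) < n := by exact_mod_cast hn
    have h2 : Real.logb 2 Pb ≤ -((n:ℝ) * a) := by
      have h3 := mul_le_mul_of_nonneg_left h hnR.le
      have h4 : (n:ℝ) * (-(n:ℝ)⁻¹ * Real.logb 2 Pb) = - Real.logb 2 Pb := by
        rw [show (n:ℝ) * (-(n:ℝ)⁻¹ * Real.logb 2 Pb)
            = -(((n:ℝ) * (n:ℝ)⁻¹) * Real.logb 2 Pb) from by ring,
          mul_inv_cancel₀ (ne_of_gt hnR), one_mul]
      nlinarith
    calc Pb = (2:ℝ) ^ (Real.logb 2 Pb) := (Real.rpow_logb two_pos (by norm_num) hpos).symm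
      _ ≤ (2:ℝ) ^ (-((n:ℝ) * a)) := (Real.rpow_le_rpow_left_iff one_lt_two).mpr h2


set_option maxHeartbeats 4000000 in
/-- **Converse part of the main theorem.** For any sequence of variable key rate secure
rate-distortion codes with admissible encoders, bounded key lengths, uniformly converging
conditional key rates, satisfying the compression constraint `(Rc,Dc,Ec)` with
`0 < Ec ≤ E_L(P,Dc,Rc)` and average key rate at most `R`, the limsup exiguous-distortion
exponent is at most `min{R, E_e*(D)}` for every `D ≥ Dc`. -/
theorem secure_lossy_compression_converse
    {𝓧 𝓦 𝓩 : Type*} [Fintype 𝓧] [DecidableEq 𝓧] [Fintype 𝓦] [Fintype 𝓩]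
    [Nonempty 𝓧] [Nonempty 𝓦] [Nonempty 𝓩]
    (P : 𝓧 → ℝ) (hP : IsDist P) (hPfull : ∀ x, 0 < P x)
    (dL : 𝓧 → 𝓦 → ℝ) (dE : 𝓧 → 𝓩 → ℝ)
    (hdL0 : ∀ x w, 0 ≤ dL x w) (hdE0 : ∀ x z, 0 ≤ dE x z)
    (hzeroL : ∀ x, ∃ w, dL x w = 0) (hzeroE : ∀ x, ∃ z, dE x z = 0)
    (hlenient : ∀ (n : ℕ) (w : Fin n → 𝓦), ∃ z : Fin n → 𝓩, ∀ x : Fin n → 𝓧,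
      seqDist dE x z ≤ seqDist dL x w)
    (Dc Rc : ℝ) (hDc : 0 ≤ Dc)
    (Ec : ℝ) (hEc : 0 < Ec) (hEcMarton : (Ec : EReal) ≤ martonExp P dL Dc Rc)
    (R : ℝ) (hR : 0 ≤ R)
    -- the code sequence
    (m : ℕ → ℕ) (hm : ∀ n, 0 < m n)
    (k : ∀ n : ℕ, (Fin n → 𝓧) → ℕ)
    (f : ∀ n : ℕ, (Fin n → 𝓧) → (ℕ → Bool) → Fin (m n))
    (φ : ∀ n : ℕ, Fin (m n) → (ℕ → Bool) → (Fin n → 𝓦))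
    -- the encoder only uses the first `k n x` key bits
    (hfdep : ∀ (n : ℕ) (x : Fin n → 𝓧) (u u' : ℕ → Bool),
      (∀ i < k n x, u i = u' i) → f n x u = f n x u')
    -- (1) upper bound on the key rate
    (hkbd : ∀ (n : ℕ) (x : Fin n → 𝓧), (k n x : ℝ) ≤ n * Real.logb 2 (Fintype.card 𝓧))
    -- (2) uniform convergence in probability of the conditional key rate
    (Rbar : (𝓧 → ℝ) → ℝ)
    (hconv : ∀ δ > (0 : ℝ), ∀ ε > (0 : ℝ), ∃ N : ℕ, ∀ n ≥ N, ∀ Q : 𝓧 → ℝ,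
      (∃ x : Fin n → 𝓧, empDist x = Q) →
      ((typeClass 𝓧 n Q ∩ {x | δ < |(k n x : ℝ) / n - Rbar Q|}).ncard : ℝ)
          / ((typeClass 𝓧 n Q).ncard : ℝ) ≤ ε)
    -- (3) admissible encoders
    (hadm : ∀ (n : ℕ) (x : Fin n → 𝓧) (u u' : ℕ → Bool),
      f n x u = f n x u' → ∀ i < k n x, u i = u' i)
    -- (4) compression constraint (Rc, Dc, Ec)
    (hrate : Filter.limsup (fun n : ℕ => (n : ℝ)⁻¹ * Real.logb 2 (m n)) Filter.atTop ≤ Rc)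
    (hexcess : ∀ u : ℕ → Bool,
      Ec ≤ Filter.liminf (fun n : ℕ =>
        -(n : ℝ)⁻¹ * Real.logb 2
          (∑ x : Fin n → 𝓧, (∏ i, P (x i)) *
            ind (Dc ≤ seqDist dL x (φ n (f n x u) u)))) Filter.atTop)
    -- (5) average key rate at most R
    (havg : ∀ n : ℕ, (∑ x : Fin n → 𝓧, (∏ i, P (x i)) * (k n x : ℝ)) / n ≤ R) :
    ∀ D : ℝ, Dc ≤ D →
      Filter.limsup (fun n : ℕ =>
          -(n : ℝ)⁻¹ * Real.logb 2
            (⨆ σ : Fin (m n) → (Fin n → 𝓩),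
              ((2 : ℝ) ^ (Finset.univ.sup (k n) : ℕ))⁻¹ *
                ∑ u : Fin (Finset.univ.sup (k n)) → Bool,
                  ∑ x : Fin n → 𝓧, (∏ i, P (x i)) *
                    ind (seqDist dE x (σ (f n x (extKey u))) ≤ D)))
          Filter.atTop
        ≤ min R (perfSecExp P dE D) := by
  classical
  intro D hDcD
  have hD0 : 0 ≤ D := le_trans hDc hDcD
  have hgoalfun : (fun n : ℕ =>
      -(n : ℝ)⁻¹ * Real.logb 2
        (⨆ σ : Fin (m n) → (Fin n → 𝓩),
          ((2 : ℝ) ^ (Finset.univ.sup (k n) : ℕ))⁻¹ *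
            ∑ u : Fin (Finset.univ.sup (k n)) → Bool,
              ∑ x : Fin n → 𝓧, (∏ i, P (x i)) *
                ind (seqDist dE x (σ (f n x (extKey u))) ≤ D)))
      = fun n : ℕ => -(n : ℝ)⁻¹ * Real.logb 2
          (supval P dE D n (m n) (Finset.univ.sup (k n)) (f n)) := rfl
  rw [hgoalfun]
  have hA0 : ∀ n : ℕ, (0:ℝ) ≤ -(n : ℝ)⁻¹ * Real.logb 2
      (supval P dE D n (m n) (Finset.univ.sup (k n)) (f n)) := by
    intro n
    have h1 : Real.logb 2 (supval P dE D n (m n) (Finset.univ.sup (k n)) (f n)) ≤ 0 :=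
      Real.logb_nonpos one_lt_two
        (supval_nonneg P dE D n (m n) (Finset.univ.sup (k n)) (f n) (fun a => (hPfull a).le))
        (supval_le_one P dE D n (m n) (Finset.univ.sup (k n)) (f n) hP)
    have h2 : (0:ℝ) ≤ (n:ℝ)⁻¹ := by positivity
    nlinarith
  refine le_of_forall_pos_le_add fun ε hε => ?_
  refine Filter.limsup_le_of_le (Filter.isCoboundedUnder_le_of_le Filter.atTop hA0) ?_
  set u₀ : ℕ → Bool := fun _ => false with hu₀def
  -- Part II : the perfect-secrecy exponent bound
  obtain ⟨N₂, hN₂⟩ := partII P hP hPfull dE hdE0 hzeroE D hD0 ε hε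
  have hevII : ∀ᶠ n : ℕ in Filter.atTop, -(n : ℝ)⁻¹ * Real.logb 2
      (supval P dE D n (m n) (Finset.univ.sup (k n)) (f n)) ≤ perfSecExp P dE D + ε := by
    rw [Filter.eventually_atTop]
    refine ⟨max N₂ 1, fun n hn => ?_⟩
    have hn1 : 1 ≤ n := le_trans (le_max_right _ _) hn
    have hn0 : 0 < n := hn1
    have hnR : (0:ℝ) < n := by exact_mod_cast hn0
    obtain ⟨z, hz⟩ := hN₂ n (le_trans (le_max_left _ _) hn) hn0
    have hlow : (2:ℝ) ^ (-((n:ℝ) * (perfSecExp P dE D + ε)))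
        ≤ supval P dE D n (m n) (Finset.univ.sup (k n)) (f n) :=
      le_trans hz (const_le_supval P dE D n (m n) (Finset.univ.sup (k n)) (f n) hP z)
    refine le_trans (neg_inv_logb_mono (n := n) (Real.rpow_pos_of_pos two_pos _) hlow) ?_
    rw [Real.logb_rpow two_pos (by norm_num),
      show -(n:ℝ)⁻¹ * (-((n:ℝ) * (perfSecExp P dE D + ε)))
        = ((n:ℝ)⁻¹ * n) * (perfSecExp P dE D + ε) by ring,
      inv_mul_cancel₀ (ne_of_gt hnR), one_mul]
  -- Probability of decoding failure is eventually small
  have hPbadEv : ∀ η : ℝ, 0 < η → ∀ᶠ n in Filter.atTop,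
      (∑ x : Fin n → 𝓧, (∏ i, P (x i)) *
        ind (Dc ≤ seqDist dL x (φ n (f n x u₀) u₀))) ≤ η := by
    intro η hη
    obtain ⟨a, ha_pos, ha_ev⟩ := exists_pos_eventually_le_of_liminf hEc (hexcess u₀)
    refine ((ha_ev.and ((eventually_rpow_small ha_pos hη).and
      (Filter.eventually_ge_atTop 1)))).mono ?_
    rintro n ⟨hab, hrp, hn1⟩
    have hPb0 : (0:ℝ) ≤ ∑ x : Fin n → 𝓧, (∏ i, P (x i)) *
        ind (Dc ≤ seqDist dL x (φ n (f n x u₀) u₀)) :=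
      Finset.sum_nonneg fun x _ => mul_nonneg
        (Finset.prod_nonneg fun i _ => (hPfull _).le) (ind_nonneg _)
    exact le_trans (prob_le_of_exponent_ge hPb0 hn1 hab) hrp
  -- Part I : the key-rate bound
  have hevI : ∀ᶠ n : ℕ in Filter.atTop, -(n : ℝ)⁻¹ * Real.logb 2
      (supval P dE D n (m n) (Finset.univ.sup (k n)) (f n)) ≤ R + ε := by
    set η : ℝ := min (1/2) (ε/(2*R+ε)) with hηdef
    have hηpos : 0 < η := lt_min (by norm_num) (by positivity)
    have hη12 : η ≤ 1/2 := min_le_left _ _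
    have hηε : η ≤ ε/(2*R+ε) := min_le_right _ _
    refine ((hPbadEv η hηpos).and ((Filter.eventually_ge_atTop 1).and
      (Filter.eventually_ge_atTop (⌈2/ε⌉₊ + 1)))).mono ?_
    rintro n ⟨hbad, hn1, hn2⟩
    have hn0 : 0 < n := hn1
    have hnR : (0:ℝ) < n := by exact_mod_cast hn0
    have hnε : 1 ≤ (n:ℝ) * (ε/2) := by
      have h1 : (⌈2/ε⌉₊ : ℝ) ≤ n := by exact_mod_cast le_trans (Nat.le_succ _) hn2
      have h2 : 2/ε ≤ (n:ℝ) := le_trans (Nat.le_ceil _) h1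
      rw [div_le_iff₀ hε] at h2
      nlinarith
    set K := Finset.univ.sup (k n) with hKdef
    set p := ∑ x : Fin n → 𝓧, (∏ i, P (x i)) *
      ind (seqDist dL x (φ n (f n x u₀) u₀) < Dc) with hpdef
    have hcompl : p = 1 - (∑ x : Fin n → 𝓧, (∏ i, P (x i)) *
        ind (Dc ≤ seqDist dL x (φ n (f n x u₀) u₀))) := by
      have h1 : ∀ x : Fin n → 𝓧, (∏ i, P (x i)) *
          ind (seqDist dL x (φ n (f n x u₀) u₀) < Dc)
          = (∏ i, P (x i)) - (∏ i, P (x i)) *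
            ind (Dc ≤ seqDist dL x (φ n (f n x u₀) u₀)) := by
        intro x
        by_cases h : seqDist dL x (φ n (f n x u₀) u₀) < Dc
        · rw [ind_of h, ind_of_not (not_le.mpr h)]; ring
        · rw [ind_of_not h, ind_of (not_lt.mp h)]; ring
      rw [hpdef, Finset.sum_congr rfl fun x _ => h1 x, Finset.sum_sub_distrib,
        sum_prod_dist P hP.2]
    have hp_lb : 1 - η ≤ p := by rw [hcompl]; linarith
    have hp_half : (1:ℝ)/2 ≤ p := le_trans (by linarith) hp_lb
    have hp_pos : 0 < p := by linarith
    set σR : Fin (m n) → (Fin n → 𝓩) := fun y => Classical.choose (hlenient n (φ n y u₀))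
      with hσRdef
    have hσRspec : ∀ y : Fin (m n), ∀ x : Fin n → 𝓧,
        seqDist dE x (σR y) ≤ seqDist dL x (φ n y u₀) := fun y =>
      Classical.choose_spec (hlenient n (φ n y u₀))
    have hptind : ∀ (x : Fin n → 𝓧) (u : Fin K → Bool),
        ind (seqDist dL x (φ n (f n x u₀) u₀) < Dc) *
          ind (∀ i : Fin K, (i:ℕ) < k n x → u i = false)
        ≤ ind (seqDist dE x (σR (f n x (extKey u))) ≤ D) := by
      intro x u
      refine ind_mul_le ?_
      intro hGx hpref
      have hkK : k n x ≤ K := by rw [hKdef]; exact Finset.le_sup (Finset.mem_univ x)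
      have hfeq : f n x (extKey u) = f n x u₀ := by
        refine hfdep n x (extKey u) u₀ ?_
        intro i hi
        have hiK : i < K := lt_of_lt_of_le hi hkK
        have h1 : extKey u i = u ⟨i, hiK⟩ := by unfold extKey; rw [dif_pos hiK]
        rw [h1, hpref ⟨i, hiK⟩ hi]
      rw [hfeq]
      exact le_of_lt
        (calc seqDist dE x (σR (f n x u₀)) ≤ seqDist dL x (φ n (f n x u₀) u₀) :=
            hσRspec (f n x u₀) x
          _ < Dc := hGx
          _ ≤ D := hDcD)
    have hval : ∑ x : Fin n → 𝓧, ((∏ i, P (x i)) *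
          ind (seqDist dL x (φ n (f n x u₀) u₀) < Dc)) * (2:ℝ)^(-(k n x : ℝ))
        ≤ ((2 : ℝ) ^ (K : ℕ))⁻¹ * ∑ u : Fin K → Bool, ∑ x : Fin n → 𝓧, (∏ i, P (x i)) *
          ind (seqDist dE x (σR (f n x (extKey u))) ≤ D) := by
      have hstep1 : ∀ x : Fin n → 𝓧, ((∏ i, P (x i)) *
          ind (seqDist dL x (φ n (f n x u₀) u₀) < Dc)) * (2:ℝ)^(K - k n x)
          ≤ ∑ u : Fin K → Bool, (∏ i, P (x i)) *
            ind (seqDist dE x (σR (f n x (extKey u))) ≤ D) := by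
        intro x
        have hkK : k n x ≤ K := by rw [hKdef]; exact Finset.le_sup (Finset.mem_univ x)
        have hnn : 0 ≤ (∏ i, P (x i)) * ind (seqDist dL x (φ n (f n x u₀) u₀) < Dc) :=
          mul_nonneg (Finset.prod_nonneg fun i _ => (hPfull _).le) (ind_nonneg _)
        calc ((∏ i, P (x i)) * ind (seqDist dL x (φ n (f n x u₀) u₀) < Dc)) * (2:ℝ)^(K - k n x)
            ≤ ((∏ i, P (x i)) * ind (seqDist dL x (φ n (f n x u₀) u₀) < Dc)) *
              ∑ u : Fin K → Bool, ind (∀ i : Fin K, (i:ℕ) < k n x → u i = false) :=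
              mul_le_mul_of_nonneg_left (count_prefix K (k n x) hkK) hnn
          _ = ∑ u : Fin K → Bool, (∏ i, P (x i)) *
              (ind (seqDist dL x (φ n (f n x u₀) u₀) < Dc) *
                ind (∀ i : Fin K, (i:ℕ) < k n x → u i = false)) := by
              rw [Finset.mul_sum]
              refine Finset.sum_congr rfl fun u _ => ?_
              ring
          _ ≤ ∑ u : Fin K → Bool, (∏ i, P (x i)) *
              ind (seqDist dE x (σR (f n x (extKey u))) ≤ D) := by
              refine Finset.sum_le_sum fun u _ => ?_
              exact mul_le_mul_of_nonneg_left (hptind x u)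
                (Finset.prod_nonneg fun i _ => (hPfull _).le)
      have hstep2 : ∑ x : Fin n → 𝓧, ((∏ i, P (x i)) *
            ind (seqDist dL x (φ n (f n x u₀) u₀) < Dc)) * (2:ℝ)^(K - k n x)
          ≤ ∑ u : Fin K → Bool, ∑ x : Fin n → 𝓧, (∏ i, P (x i)) *
            ind (seqDist dE x (σR (f n x (extKey u))) ≤ D) := by
        rw [Finset.sum_comm]
        exact Finset.sum_le_sum fun x _ => hstep1 x
      calc ∑ x : Fin n → 𝓧, ((∏ i, P (x i)) *
            ind (seqDist dL x (φ n (f n x u₀) u₀) < Dc)) * (2:ℝ)^(-(k n x : ℝ))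
          = ((2 : ℝ) ^ (K : ℕ))⁻¹ * ∑ x : Fin n → 𝓧, ((∏ i, P (x i)) *
            ind (seqDist dL x (φ n (f n x u₀) u₀) < Dc)) * (2:ℝ)^(K - k n x) := by
            rw [Finset.mul_sum]
            refine Finset.sum_congr rfl fun x _ => ?_
            have hkK : k n x ≤ K := by rw [hKdef]; exact Finset.le_sup (Finset.mem_univ x)
            rw [← pow_sub_inv K (k n x) hkK]
            ring
        _ ≤ _ := mul_le_mul_of_nonneg_left hstep2 (by positivity)
    set w : (Fin n → 𝓧) → ℝ := fun x => ((∏ i, P (x i)) *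
      ind (seqDist dL x (φ n (f n x u₀) u₀) < Dc)) / p with hwdef
    have hw0 : ∀ x, 0 ≤ w x := fun x => div_nonneg
      (mul_nonneg (Finset.prod_nonneg fun i _ => (hPfull _).le) (ind_nonneg _)) hp_pos.le
    have hw1 : ∑ x, w x = 1 := by
      simp only [hwdef]
      rw [← Finset.sum_div, ← hpdef, div_self (ne_of_gt hp_pos)]
    have hjen := jensen_rpow w (fun x => (k n x : ℝ)) hw0 hw1
    have hmean : ∑ x, w x * (k n x : ℝ) ≤ (n:ℝ) * R / p := by
      have h1 : ∑ x : Fin n → 𝓧, ((∏ i, P (x i)) *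
          ind (seqDist dL x (φ n (f n x u₀) u₀) < Dc)) * (k n x : ℝ)
          ≤ ∑ x : Fin n → 𝓧, (∏ i, P (x i)) * (k n x : ℝ) := by
        refine Finset.sum_le_sum fun x _ => ?_
        have hp0 : (0:ℝ) ≤ ∏ i, P (x i) := Finset.prod_nonneg fun i _ => (hPfull _).le
        calc ((∏ i, P (x i)) * ind (seqDist dL x (φ n (f n x u₀) u₀) < Dc)) * (k n x : ℝ)
            ≤ ((∏ i, P (x i)) * 1) * (k n x : ℝ) :=
              mul_le_mul_of_nonneg_right
                (mul_le_mul_of_nonneg_left (ind_le_one _) hp0)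
                (by positivity)
          _ = (∏ i, P (x i)) * (k n x : ℝ) := by ring
      have h2 : ∑ x : Fin n → 𝓧, (∏ i, P (x i)) * (k n x : ℝ) ≤ (n:ℝ) * R := by
        have h3 := havg n
        rw [div_le_iff₀ hnR] at h3
        linarith
      calc ∑ x, w x * (k n x : ℝ)
          = (∑ x : Fin n → 𝓧, ((∏ i, P (x i)) *
            ind (seqDist dL x (φ n (f n x u₀) u₀) < Dc)) * (k n x : ℝ)) / p := by
            rw [Finset.sum_div]
            refine Finset.sum_congr rfl fun x _ => ?_
            simp only [hwdef]
            ring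
        _ ≤ ((n:ℝ) * R) / p := (div_le_div_iff_of_pos_right hp_pos).mpr (le_trans h1 h2)
    have hjen2 : p * (2:ℝ)^(-((n:ℝ) * R / p)) ≤ ∑ x : Fin n → 𝓧, ((∏ i, P (x i)) *
        ind (seqDist dL x (φ n (f n x u₀) u₀) < Dc)) * (2:ℝ)^(-(k n x : ℝ)) := by
      have h1 : (2:ℝ)^(-((n:ℝ) * R / p)) ≤ (2:ℝ)^(-(∑ x, w x * (k n x : ℝ))) :=
        (Real.rpow_le_rpow_left_iff one_lt_two).mpr (by linarith [hmean])
      have h2 : p * ∑ x, w x * (2:ℝ)^(-((k n x : ℝ))) = ∑ x : Fin n → 𝓧, ((∏ i, P (x i)) *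
          ind (seqDist dL x (φ n (f n x u₀) u₀) < Dc)) * (2:ℝ)^(-(k n x : ℝ)) := by
        rw [Finset.mul_sum]
        refine Finset.sum_congr rfl fun x _ => ?_
        simp only [hwdef]
        field_simp
      calc p * (2:ℝ)^(-((n:ℝ) * R / p)) ≤ p * (2:ℝ)^(-(∑ x, w x * (k n x : ℝ))) :=
          mul_le_mul_of_nonneg_left h1 hp_pos.le
        _ ≤ p * ∑ x, w x * (2:ℝ)^(-((k n x : ℝ))) := mul_le_mul_of_nonneg_left hjen hp_pos.le
        _ = _ := h2
    have hfinal : (2:ℝ)^(-((n:ℝ) * (R + ε))) ≤ p * (2:ℝ)^(-((n:ℝ) * R / p)) := by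
      have hRdiv : R / p ≤ R + ε/2 := by
        rw [div_le_iff₀ hp_pos]
        have hkey : (ε/(2*R+ε)) * (R + ε/2) = ε/2 := by field_simp
        nlinarith [hp_lb, hηε]
      have hRp : (n:ℝ) * R / p + 1 ≤ (n:ℝ) * (R + ε) := by
        have h3 : (n:ℝ) * R / p = (n:ℝ) * (R / p) := by ring
        have h4 : (n:ℝ) * (R/p) ≤ (n:ℝ) * (R + ε/2) := mul_le_mul_of_nonneg_left hRdiv hnR.le
        have h5 : (n:ℝ) * (R + ε) = (n:ℝ)*(R + ε/2) + (n:ℝ)*(ε/2) := by ring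
        linarith
      calc (2:ℝ)^(-((n:ℝ) * (R + ε)))
          ≤ (2:ℝ)^(-((n:ℝ) * R / p) + (-1:ℝ)) := by
            refine (Real.rpow_le_rpow_left_iff one_lt_two).mpr ?_
            linarith
        _ = (2:ℝ)^(-((n:ℝ) * R / p)) * (2:ℝ)^(-1:ℝ) := Real.rpow_add two_pos _ _
        _ = (2:ℝ)^(-((n:ℝ) * R / p)) * (1/2) := by rw [Real.rpow_neg_one]; norm_num
        _ ≤ p * (2:ℝ)^(-((n:ℝ) * R / p)) := by
            have h6 : (0:ℝ) ≤ (2:ℝ)^(-((n:ℝ) * R / p)) := Real.rpow_nonneg (by norm_num) _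
            nlinarith [hp_half]
    have hlow : (2:ℝ)^(-((n:ℝ) * (R + ε))) ≤ supval P dE D n (m n) K (f n) :=
      le_trans hfinal (le_trans hjen2 (le_trans hval (le_supval P dE D n (m n) K (f n) σR)))
    refine le_trans (neg_inv_logb_mono (n := n) (Real.rpow_pos_of_pos two_pos _) hlow) ?_
    rw [Real.logb_rpow two_pos (by norm_num),
      show -(n:ℝ)⁻¹ * (-((n:ℝ) * (R + ε))) = ((n:ℝ)⁻¹ * n) * (R + ε) by ring,
      inv_mul_cancel₀ (ne_of_gt hnR), one_mul]
  refine (hevI.and hevII).mono ?_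
  rintro n ⟨h1, h2⟩
  rcases le_total R (perfSecExp P dE D) with hc | hc
  · rw [min_eq_left hc]; exact h1
  · rw [min_eq_right hc]; exact h2

end
end

section
/- Hamming distance between close type classes: Let 𝒳 be a finite alphabet and Q, Q' ∈ 𝒫_n(𝒳) two types of length-n sequences with variational distance ‖Q − Q'‖ = ∑_{a∈𝒳} |Q(a) − Q'(a)| = 2d*/n for some integer d* > 0. Then for every x ∈ T_n(Q) there exists x' ∈ T_n(Q') with Hamming distance d_H(x,x') ≤ d*, i.e. min_{x' ∈ T_n(Q')} d_H(x,x') ≤ d*. -/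
open scoped BigOperators

noncomputable section

/-!
Write `N_x(a)` for the number of occurrences of `a` in `x`, so that
`‖Q̂_x − Q̂_y‖ = ∑ₐ |N_x(a) − N_y(a)| / n`. While `N_x ≠ N_y`, both have total mass `n`, so some
symbol `a` is over-represented in `x` and some `b` under-represented; overwriting one occurrence
of `a` by `b` changes one coordinate and lowers `∑ₐ |N_x(a) − N_y(a)|` by exactly `2`. Starting
from `‖Q − Q'‖ = 2d*/n`, this reaches `T_n(Q')` after `d*` such steps.
-/

open Finset

namespace HammingTypes

variable {ι A : Type*} [Fintype ι] [DecidableEq ι] [Fintype A] [DecidableEq A]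

def symbolCount (x : ι → A) (a : A) : ℕ := #{i | x i = a}

def countDist (x y : ι → A) : ℕ := ∑ a, ((symbolCount x a : ℤ) - symbolCount y a).natAbs

omit [DecidableEq ι] in
lemma sum_symbolCount (x : ι → A) : ∑ a, symbolCount x a = Fintype.card ι :=
  (card_eq_sum_card_fiberwise fun i _ => mem_univ (x i)).symm

omit [DecidableEq ι] in
lemma exists_symbolCount_lt_of_ne {x y : ι → A} (h : symbolCount x ≠ symbolCount y) :
    ∃ a, symbolCount y a < symbolCount x a := by
  by_contra! hle
  refine h (funext fun a => le_antisymm (hle a) ?_)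
  have hsum : ∑ a, symbolCount x a = ∑ a, symbolCount y a := by
    rw [sum_symbolCount, sum_symbolCount]
  exact ((sum_eq_sum_iff_of_le fun a _ => hle a).mp hsum a (mem_univ a)).ge

omit [Fintype A] in
lemma symbolCount_update (x : ι → A) (i : ι) (b c : A) :
    symbolCount (Function.update x i b) c + (if x i = c then 1 else 0)
      = symbolCount x c + (if b = c then 1 else 0) := by
  simp only [symbolCount, card_filter]
  rw [← Function.comp_def (fun v : A => if v = c then 1 else 0) (Function.update x i b),
    Function.comp_update, sum_update_of_mem (mem_univ i), ← add_sum_erase _ _ (mem_univ i),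
    sdiff_singleton_eq_erase]
  simp only [Function.comp_apply]
  ring

lemma countDist_update_add_two {x y : ι → A} {i : ι} {b : A}
    (hi : symbolCount y (x i) < symbolCount x (x i)) (hb : symbolCount x b < symbolCount y b) :
    countDist (Function.update x i b) y + 2 = countDist x y := by
  have hne : x i ≠ b := fun h => (h ▸ hi).asymm hb
  have hpoint : ∀ c,
      ((symbolCount (Function.update x i b) c : ℤ) - symbolCount y c).natAbs
        + ((if c = x i then 1 else 0) + (if c = b then 1 else 0))
      = ((symbolCount x c : ℤ) - symbolCount y c).natAbs := by
    intro c
    have hupd := symbolCount_update x i b c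
    rcases eq_or_ne c (x i) with rfl | hca
    · simp only [↓reduceIte, if_neg hne, if_neg (Ne.symm hne)] at hupd ⊢
      omega
    rcases eq_or_ne c b with rfl | hcb
    · simp only [↓reduceIte, if_neg hca, if_neg (Ne.symm hca)] at hupd ⊢
      omega
    simp only [if_neg hca, if_neg hcb, if_neg (Ne.symm hca), if_neg (Ne.symm hcb)] at hupd ⊢
    omega
  simp only [countDist, ← Fintype.sum_congr _ _ hpoint, sum_add_distrib, sum_ite_eq',
    mem_univ, if_true]

omit [Fintype A] in
lemma hammingDist_update_le_one (x : ι → A) (i : ι) (b : A) :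
    hammingDist x (Function.update x i b) ≤ 1 := by
  refine (card_le_card fun j hj => ?_).trans (card_singleton i).le
  by_contra hji
  exact (mem_filter.mp hj).2 (Function.update_of_ne (mem_singleton.not.mp hji) b x).symm

omit [DecidableEq ι] in
lemma exists_symbolCount_eq_two_mul_hammingDist_le (x y : ι → A) :
    ∃ x', symbolCount x' = symbolCount y ∧ 2 * hammingDist x x' ≤ countDist x y := by
  classical
  induction hd : countDist x y using Nat.strong_induction_on generalizing x with
  | _ d ih =>
    by_cases heq : symbolCount x = symbolCount y
    · exact ⟨x, heq, by simp⟩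
    obtain ⟨a, ha⟩ := exists_symbolCount_lt_of_ne heq
    obtain ⟨b, hb⟩ := exists_symbolCount_lt_of_ne (Ne.symm heq)
    obtain ⟨i, hi⟩ := card_pos.mp (ha.trans_le' (Nat.zero_le _))
    obtain rfl : x i = a := (mem_filter.mp hi).2
    have hstep := countDist_update_add_two ha hb
    obtain ⟨x', hx', hdist⟩ := ih _ (by omega) (Function.update x i b) rfl
    refine ⟨x', hx', ?_⟩
    have := hammingDist_triangle x (Function.update x i b) x'
    have := hammingDist_update_le_one x i b
    omega

variable {n : ℕ}

lemma empDist_eq_symbolCount_div (x : Fin n → A) :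
    empDist x = fun a => (symbolCount x a : ℝ) / n := rfl

lemma sum_abs_empDist_sub (x y : Fin n → A) :
    ∑ a, |empDist x a - empDist y a| = countDist x y / n := by
  simp only [empDist_eq_symbolCount_div, countDist, Nat.cast_sum, sum_div, ← sub_div, abs_div,
    Nat.abs_cast, Nat.cast_natAbs, Int.cast_abs, Int.cast_sub, Int.cast_natCast]

end HammingTypes

open HammingTypes

theorem hamming_distance_close_types_general
    {𝓧 : Type*} [Fintype 𝓧] [DecidableEq 𝓧] {n : ℕ}
    (Q Q' : 𝓧 → ℝ)
    (hQ' : ∃ x : Fin n → 𝓧, empDist x = Q')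
    (dstar : ℕ)
    (hdist : ∑ a, |Q a - Q' a| = 2 * (dstar : ℝ) / n)
    (x : Fin n → 𝓧) (hx : x ∈ typeClass 𝓧 n Q) :
    ∃ x' : Fin n → 𝓧, x' ∈ typeClass 𝓧 n Q' ∧ hammingDist x x' ≤ dstar := by
  obtain ⟨y, rfl⟩ := hQ'
  rcases Nat.eq_zero_or_pos n with rfl | hn
  · exact ⟨y, rfl, by simp [Subsingleton.elim x y]⟩
  have hcount : countDist x y = 2 * dstar := by
    rw [← show empDist x = Q from hx, sum_abs_empDist_sub, div_left_inj' (by positivity)] at hdist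
    exact_mod_cast hdist
  obtain ⟨x', hx', hle⟩ := exists_symbolCount_eq_two_mul_hammingDist_le x y
  refine ⟨x', ?_, by omega⟩
  show empDist x' = empDist y
  rw [empDist_eq_symbolCount_div, empDist_eq_symbolCount_div, hx']

/-- **Hamming distance between close type classes.** If `Q, Q'` are types of length-`n`
sequences with variational distance `‖Q − Q'‖ = 2d*/n` for some integer `d* > 0`, then every
`x ∈ T_n(Q)` is within Hamming distance `d*` of some `x' ∈ T_n(Q')`. -/
theorem hamming_distance_close_types
    {𝓧 : Type*} [Fintype 𝓧] [DecidableEq 𝓧] {n : ℕ}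
    (Q Q' : 𝓧 → ℝ)
    (hQ : ∃ x : Fin n → 𝓧, empDist x = Q) (hQ' : ∃ x : Fin n → 𝓧, empDist x = Q')
    (dstar : ℕ) (hdstar : 0 < dstar)
    (hdist : ∑ a, |Q a - Q' a| = 2 * (dstar : ℝ) / n)
    (x : Fin n → 𝓧) (hx : x ∈ typeClass 𝓧 n Q) :
    ∃ x' : Fin n → 𝓧, x' ∈ typeClass 𝓧 n Q' ∧ hammingDist x x' ≤ dstar :=
  hamming_distance_close_types_general Q Q' hQ' dstar hdist x hx
end
end
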